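/- arXiv:2510.10730 — 11 statements merged into one kernel-verified Lean document; each statement's English description precedes it below -/
import Mathlib

section
/- Let μ : ℝ → ℝ be twice differentiable with μ'(u) > 0 for all u ∈ ℝ and M-self-concordant for some M > 0, i.e. |μ''(u)| ≤ M·μ'(u) for all u ∈ ℝ. Then for all u, u' ∈ ℝ with u ≠ u', one has μ'(u)·h_s(−M·|u − u'|) ≤ (μ(u) − μ(u'))/(u − u') ≤ μ'(u)·h_s(M·|u − u'|), where h_s(x) = (e^x − 1)/x for x ≠ 0 and h_s(0) = 1. -/
/-- `h_s(x) = (e^x − 1)/x` for `x ≠ 0` and `h_s(0) = 1`. -/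
noncomputable def hs (x : ℝ) : ℝ := if x = 0 then 1 else (Real.exp x - 1) / x

lemma continuous_exp_mul_sub (c d : ℝ) : Continuous fun t : ℝ => Real.exp (c * (t - d)) :=
  Real.continuous_exp.comp (continuous_const.mul (continuous_id.sub continuous_const))

/-- `∫ t in a..b, exp (c*(t-d)) = (exp (c*(b-d)) - exp (c*(a-d)))/c` for `c ≠ 0`. -/
lemma integral_exp_mul_sub (c d a b : ℝ) (hc : c ≠ 0) :
    ∫ t in a..b, Real.exp (c * (t - d))
      = (Real.exp (c * (b - d)) - Real.exp (c * (a - d))) / c := by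
  have key : ∀ t : ℝ, HasDerivAt (fun t => Real.exp (c * (t - d)) / c)
      (Real.exp (c * (t - d))) t := by
    intro t
    have h1 : HasDerivAt (fun t : ℝ => c * (t - d)) c t := by
      simpa using (((hasDerivAt_id t).sub_const d).const_mul c)
    have := (h1.exp).div_const c
    simpa [mul_div_assoc, mul_div_cancel_left₀ _ hc, mul_comm] using this
  have := intervalIntegral.integral_eq_sub_of_hasDerivAt
    (f := fun t => Real.exp (c * (t - d)) / c)
    (f' := fun t => Real.exp (c * (t - d))) (a := a) (b := b)
    (fun x _ => key x)
    ((continuous_exp_mul_sub c d).intervalIntegrable a b)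
  rw [this]; ring

/-- Self-concordance bound on the secant slope of the link function `μ`:
if `μ` is twice differentiable, strictly increasing with `μ' > 0`, and `M`-self-concordant,
then `μ'(u)·h_s(−M·|u − u'|) ≤ (μ(u) − μ(u'))/(u − u') ≤ μ'(u)·h_s(M·|u − u'|)`. -/
theorem secant_bounds_of_self_concordant
    (M : ℝ) (hM : 0 < M) (μ : ℝ → ℝ)
    (hdiff : Differentiable ℝ μ) (hdiff2 : Differentiable ℝ (deriv μ))
    (hpos : ∀ u : ℝ, 0 < deriv μ u)
    (hsc : ∀ u : ℝ, |deriv (deriv μ) u| ≤ M * deriv μ u) :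
    ∀ u u' : ℝ, u ≠ u' →
      deriv μ u * hs (-(M * |u - u'|)) ≤ (μ u - μ u') / (u - u') ∧
      (μ u - μ u') / (u - u') ≤ deriv μ u * hs (M * |u - u'|) := by
  set f := deriv μ with hf
  -- Lipschitz bound on log ∘ f
  have hlog : ∀ v u : ℝ, |Real.log (f v) - Real.log (f u)| ≤ M * |v - u| := by
    intro v u
    have hd : ∀ x ∈ (Set.univ : Set ℝ), DifferentiableAt ℝ (fun t => Real.log (f t)) x := by
      intro x _
      exact ((hdiff2 x).hasDerivAt.log (hpos x).ne').differentiableAt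
    have hb : ∀ x ∈ (Set.univ : Set ℝ), ‖deriv (fun t => Real.log (f t)) x‖ ≤ M := by
      intro x _
      have hder : deriv (fun t => Real.log (f t)) x = deriv f x / f x :=
        ((hdiff2 x).hasDerivAt.log (hpos x).ne').deriv
      rw [hder, Real.norm_eq_abs, abs_div, abs_of_pos (hpos x),
        div_le_iff₀ (hpos x)]
      exact hsc x
    have := Convex.norm_image_sub_le_of_norm_deriv_le hd hb convex_univ
      (Set.mem_univ u) (Set.mem_univ v)
    simpa [Real.norm_eq_abs] using this
  have hub : ∀ v u : ℝ, f v ≤ f u * Real.exp (M * |v - u|) := by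
    intro v u
    have h1 : Real.log (f v) ≤ Real.log (f u) + M * |v - u| := by
      have := (abs_le.mp (hlog v u)).2; linarith
    calc f v = Real.exp (Real.log (f v)) := (Real.exp_log (hpos v)).symm
      _ ≤ Real.exp (Real.log (f u) + M * |v - u|) := Real.exp_le_exp.mpr h1
      _ = f u * Real.exp (M * |v - u|) := by
          rw [Real.exp_add, Real.exp_log (hpos u)]
  have hlb : ∀ v u : ℝ, f u * Real.exp (-(M * |v - u|)) ≤ f v := by
    intro v u
    have h1 : Real.log (f u) - M * |v - u| ≤ Real.log (f v) := by
      have := (abs_le.mp (hlog v u)).1; linarith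
    calc f u * Real.exp (-(M * |v - u|))
        = Real.exp (Real.log (f u) - M * |v - u|) := by
          rw [Real.exp_sub, Real.exp_log (hpos u), Real.exp_neg, div_eq_mul_inv]
      _ ≤ Real.exp (Real.log (f v)) := Real.exp_le_exp.mpr h1
      _ = f v := Real.exp_log (hpos v)
  have hfc : Continuous f := hdiff2.continuous
  have hftc : ∀ a b : ℝ, μ b - μ a = ∫ t in a..b, f t := by
    intro a b
    rw [intervalIntegral.integral_deriv_eq_sub (fun x _ => hdiff x)
      (hfc.intervalIntegrable a b)]
  intro u u' hne
  have hL : (0:ℝ) < |u - u'| := abs_pos.mpr (sub_ne_zero.mpr hne)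
  have hML : M * |u - u'| ≠ 0 := by positivity
  have hsP : hs (M * |u - u'|) = (Real.exp (M * |u - u'|) - 1) / (M * |u - u'|) := by
    rw [hs, if_neg hML]
  have hsN : hs (-(M * |u - u'|))
      = (1 - Real.exp (-(M * |u - u'|))) / (M * |u - u'|) := by
    rw [hs, if_neg (neg_ne_zero.mpr hML)]
    rw [div_neg, ← neg_div, neg_sub]
  have hM0 : M ≠ 0 := hM.ne'
  rcases lt_or_gt_of_ne hne with hlt | hlt
  · -- u < u'
    have hd0 : (0:ℝ) < u' - u := by linarith
    have habs : |u - u'| = u' - u := by rw [abs_sub_comm]; exact abs_of_pos hd0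
    have hslope : (μ u - μ u') / (u - u') = (∫ t in u..u', f t) / (u' - u) := by
      rw [← hftc]
      rw [show μ u' - μ u = -(μ u - μ u') by ring, show u' - u = -(u - u') by ring,
        neg_div_neg_eq]
    have hint1 : IntervalIntegrable f MeasureTheory.volume u u' :=
      hfc.intervalIntegrable u u'
    constructor
    · have hmono : (∫ t in u..u', f u * Real.exp ((-M) * (t - u)))
          ≤ ∫ t in u..u', f t := by
        apply intervalIntegral.integral_mono_on hlt.le
          ((continuous_const.mul (continuous_exp_mul_sub (-M) u)).intervalIntegrable u u')
          hint1
        intro x hx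
        have h1 := hlb x u
        rw [abs_of_nonneg (by linarith [hx.1] : (0:ℝ) ≤ x - u)] at h1
        simpa [neg_mul] using h1
      rw [intervalIntegral.integral_const_mul,
        integral_exp_mul_sub (-M) u u u' (by linarith)] at hmono
      rw [hslope, hsN, habs, le_div_iff₀ hd0]
      refine le_trans (le_of_eq ?_) hmono
      simp only [sub_self, mul_zero, Real.exp_zero, neg_mul]
      rw [div_neg, mul_neg]
      field_simp [hd0.ne']
      ring
    · have hmono : (∫ t in u..u', f t)
          ≤ ∫ t in u..u', f u * Real.exp (M * (t - u)) := by
        apply intervalIntegral.integral_mono_on hlt.le hint1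
          ((continuous_const.mul (continuous_exp_mul_sub M u)).intervalIntegrable u u')
        intro x hx
        simpa [abs_of_nonneg (show (0:ℝ) ≤ x - u by linarith [hx.1])] using hub x u
      rw [intervalIntegral.integral_const_mul,
        integral_exp_mul_sub M u u u' hM.ne'] at hmono
      rw [hslope, hsP, habs, div_le_iff₀ hd0]
      refine le_trans hmono (le_of_eq ?_)
      simp only [sub_self, mul_zero, Real.exp_zero]
      field_simp [hd0.ne']
  · -- u' < u
    have hd0 : (0:ℝ) < u - u' := by linarith
    have habs : |u - u'| = u - u' := abs_of_pos hd0
    have hslope : (μ u - μ u') / (u - u') = (∫ t in u'..u, f t) / (u - u') := by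
      rw [← hftc]
    have hint1 : IntervalIntegrable f MeasureTheory.volume u' u :=
      hfc.intervalIntegrable u' u
    constructor
    · have hmono : (∫ t in u'..u, f u * Real.exp (M * (t - u)))
          ≤ ∫ t in u'..u, f t := by
        apply intervalIntegral.integral_mono_on hlt.le
          ((continuous_const.mul (continuous_exp_mul_sub M u)).intervalIntegrable u' u)
          hint1
        intro x hx
        have h1 := hlb x u
        rw [abs_of_nonpos (by linarith [hx.2] : x - u ≤ 0)] at h1
        simp only [mul_neg, neg_neg] at h1
        exact h1
      rw [intervalIntegral.integral_const_mul,
        integral_exp_mul_sub M u u' u hM.ne'] at hmono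
      rw [hslope, hsN, habs, le_div_iff₀ hd0]
      refine le_trans (le_of_eq ?_) hmono
      simp only [sub_self, mul_zero, Real.exp_zero]
      rw [show M * (u' - u) = -(M * (u - u')) by ring]
      field_simp [hd0.ne']
    · have hmono : (∫ t in u'..u, f t)
          ≤ ∫ t in u'..u, f u * Real.exp ((-M) * (t - u)) := by
        apply intervalIntegral.integral_mono_on hlt.le hint1
          ((continuous_const.mul (continuous_exp_mul_sub (-M) u)).intervalIntegrable u' u)
        intro x hx
        have h1 := hub x u
        rw [abs_of_nonpos (by linarith [hx.2] : x - u ≤ 0)] at h1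
        simp only [mul_neg] at h1
        simpa [neg_mul] using h1
      rw [intervalIntegral.integral_const_mul,
        integral_exp_mul_sub (-M) u u' u (by linarith)] at hmono
      rw [hslope, hsP, habs, div_le_iff₀ hd0]
      refine le_trans hmono (le_of_eq ?_)
      simp only [sub_self, mul_zero, Real.exp_zero]
      rw [show (-M) * (u' - u) = M * (u - u') by ring]
      rw [div_neg, mul_neg]
      field_simp [hd0.ne']
      ring
end

section
/- Let μ : ℝ → ℝ be twice differentiable with μ'(u) > 0 for all u ∈ ℝ and M-self-concordant for some M > 0, i.e. |μ''(u)| ≤ M·μ'(u) for all u ∈ ℝ. Then for all u, v ∈ ℝ, one has μ'(u)·exp(−M·|v − u|) ≤ μ'(v) ≤ μ'(u)·exp(M·|v − u|). -/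
/-! The bound `|μ''| ≤ M μ'` says exactly that `log μ'` is `M`-Lipschitz; exponentiating the
Lipschitz estimate `|log μ'(v) - log μ'(u)| ≤ M |v - u|` gives both inequalities. -/

open Real

theorem abs_log_sub_log_le_of_abs_deriv_le {f : ℝ → ℝ} {M : ℝ} (hf : Differentiable ℝ f)
    (hpos : ∀ x, 0 < f x) (hbound : ∀ x, |deriv f x| ≤ M * f x) (u v : ℝ) :
    |log (f v) - log (f u)| ≤ M * |v - u| := by
  have hderiv : ∀ x, HasDerivAt (fun y => log (f y)) (deriv f x / f x) x := fun x =>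
    (hf x).hasDerivAt.log (hpos x).ne'
  have hnorm : ∀ x, ‖deriv f x / f x‖ ≤ M := fun x => by
    rw [norm_div, Real.norm_eq_abs, Real.norm_of_nonneg (hpos x).le, div_le_iff₀ (hpos x)]
    exact hbound x
  simpa only [Real.norm_eq_abs] using
    convex_univ.norm_image_sub_le_of_norm_hasDerivWithin_le
      (fun x _ => (hderiv x).hasDerivWithinAt) (fun x _ => hnorm x)
      (Set.mem_univ u) (Set.mem_univ v)

theorem mul_exp_neg_le_and_le_mul_exp_of_abs_log_sub_log_le {a b c : ℝ} (ha : 0 < a) (hb : 0 < b)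
    (h : |log b - log a| ≤ c) : a * exp (-c) ≤ b ∧ b ≤ a * exp c := by
  have hac : 0 < a * exp (-c) := by positivity
  have hbc : 0 < a * exp c := by positivity
  rw [abs_le] at h
  constructor
  · rw [← log_le_log_iff hac hb, log_mul ha.ne' (exp_pos _).ne', log_exp]
    linarith
  · rw [← log_le_log_iff hb hbc, log_mul ha.ne' (exp_pos _).ne', log_exp]
    linarith

theorem deriv_exp_bounds_of_self_concordant_general
    (M : ℝ) (μ : ℝ → ℝ)
    (hdiff2 : Differentiable ℝ (deriv μ))
    (hpos : ∀ u : ℝ, 0 < deriv μ u)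
    (hsc : ∀ u : ℝ, |deriv (deriv μ) u| ≤ M * deriv μ u) :
    ∀ u v : ℝ,
      deriv μ u * Real.exp (-(M * |v - u|)) ≤ deriv μ v ∧
      deriv μ v ≤ deriv μ u * Real.exp (M * |v - u|) := fun u v =>
  mul_exp_neg_le_and_le_mul_exp_of_abs_log_sub_log_le (hpos u) (hpos v)
    (abs_log_sub_log_le_of_abs_deriv_le hdiff2 hpos hsc u v)

/-- For a twice differentiable, `M`-self-concordant link function `μ` with `μ' > 0` everywhere,
the derivative varies at most exponentially:
`μ'(u)·exp(−M·|v − u|) ≤ μ'(v) ≤ μ'(u)·exp(M·|v − u|)`. -/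
theorem deriv_exp_bounds_of_self_concordant
    (M : ℝ) (hM : 0 < M) (μ : ℝ → ℝ)
    (hdiff : Differentiable ℝ μ) (hdiff2 : Differentiable ℝ (deriv μ))
    (hpos : ∀ u : ℝ, 0 < deriv μ u)
    (hsc : ∀ u : ℝ, |deriv (deriv μ) u| ≤ M * deriv μ u) :
    ∀ u v : ℝ,
      deriv μ u * Real.exp (-(M * |v - u|)) ≤ deriv μ v ∧
      deriv μ v ≤ deriv μ u * Real.exp (M * |v - u|) :=
  deriv_exp_bounds_of_self_concordant_general M μ hdiff2 hpos hsc
end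

section
/- With the GLM notation below, for all θ, θ' ∈ ℝ^d the secant matrix is symmetric in its arguments, Q(θ, θ') = Q(θ', θ), and the Hessian is dominated in the Loewner order: H(θ) ⪯ (1 + M·D(θ − θ'))·Q(θ, θ'), i.e. xᵀH(θ)x ≤ (1 + M·D(θ − θ'))·xᵀQ(θ, θ')x for all x ∈ ℝ^d. -/
/-!
Self-concordance `|μ''| ≤ M μ'` says that `log μ'` is `M`-Lipschitz, so
`μ'(v) ≥ μ'(u) e^{-M|v - u|}`. Integrating this along the segment from `u` to `u'` gives
`a α(u, u') ≥ μ'(u) (1 - e^{-a})` with `a = M|u' - u|`, and `e^a ≥ 1 + a` turns it into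
`μ'(u) ≤ (1 + a) α(u, u')`. For `u = Xᵀθ`, `u' = Xᵀθ'` we have `|u' - u| ≤ D(θ - θ')`, and
since `H(θ)` and `Q(θ, θ')` are `λ I` plus combinations of the same rank-one matrices `X Xᵀ`,
the coefficientwise bound is a Loewner bound.
-/

open Matrix

theorem mul_exp_neg_mul_abs_sub_le {f : ℝ → ℝ} {M : ℝ} (hf : Differentiable ℝ f)
    (hpos : ∀ u, 0 < f u) (hf' : ∀ u, |deriv f u| ≤ M * f u) (u v : ℝ) :
    f u * Real.exp (-(M * |v - u|)) ≤ f v := by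
  have hlog : ∀ w, HasDerivAt (fun w => Real.log (f w)) (deriv f w / f w) w := fun w =>
    (hf w).hasDerivAt.log (hpos w).ne'
  have hlip : |Real.log (f v) - Real.log (f u)| ≤ M * |v - u| :=
    convex_univ.norm_image_sub_le_of_norm_hasDerivWithin_le
      (fun w _ => (hlog w).hasDerivWithinAt)
      (fun w _ => by
        rw [Real.norm_eq_abs, abs_div, abs_of_pos (hpos w), div_le_iff₀ (hpos w)]
        exact hf' w)
      (Set.mem_univ u) (Set.mem_univ v)
  calc f u * Real.exp (-(M * |v - u|))
      = Real.exp (Real.log (f u) - M * |v - u|) := by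
        rw [Real.exp_sub, Real.exp_log (hpos u), div_eq_mul_inv, Real.exp_neg]
    _ ≤ Real.exp (Real.log (f v)) :=
        Real.exp_le_exp.mpr (by linarith [neg_abs_le (Real.log (f v) - Real.log (f u))])
    _ = f v := Real.exp_log (hpos v)

noncomputable def secant (μ : ℝ → ℝ) (u u' : ℝ) : ℝ :=
  if u = u' then deriv μ u else slope μ u u'

theorem secant_comm (μ : ℝ → ℝ) (u u' : ℝ) : secant μ u u' = secant μ u' u := by
  by_cases h : u = u'
  · rw [h]
  · rw [secant, secant, if_neg h, if_neg (Ne.symm h), slope_comm]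

section SelfConcordant

variable {μ : ℝ → ℝ} {M : ℝ}

theorem deriv_mul_one_sub_exp_le_mul_slope (hM : 0 ≤ M) (hμ : Differentiable ℝ μ)
    (hμ' : Differentiable ℝ (deriv μ)) (hpos : ∀ u, 0 < deriv μ u)
    (hsc : ∀ u, |deriv (deriv μ) u| ≤ M * deriv μ u) {u u' : ℝ} (hne : u ≠ u') :
    deriv μ u * (1 - Real.exp (-(M * |u' - u|))) ≤ M * |u' - u| * slope μ u u' := by
  set δ := u' - u with hδ
  have hδ0 : δ ≠ 0 := sub_ne_zero.mpr hne.symm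
  set a := M * |δ|
  -- `h' ≥ 0` on `s ≥ 0` by `mul_exp_neg_mul_abs_sub_le`, and `h 0 ≤ h 1` is the claim
  set h : ℝ → ℝ := fun s => a * (μ (u + s * δ) / δ) + deriv μ u * Real.exp (-(a * s))
  have hh : ∀ s,
      HasDerivAt h (a * (deriv μ (u + s * δ) - deriv μ u * Real.exp (-(a * s)))) s := by
    intro s
    have hline : HasDerivAt (fun s => u + s * δ) δ s := by
      simpa using ((hasDerivAt_id s).mul_const δ).const_add u
    have := ((((hμ _).hasDerivAt.comp s hline).div_const δ).const_mul a).add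
      ((((hasDerivAt_id s).const_mul a).neg.exp).const_mul (deriv μ u))
    refine this.congr_deriv ?_
    simp only [Pi.neg_apply, id, mul_div_cancel_right₀ _ hδ0]
    ring
  have hmono : MonotoneOn h (Set.Ici 0) := by
    refine monotoneOn_of_hasDerivWithinAt_nonneg (convex_Ici 0)
      (fun s _ => (hh s).continuousAt.continuousWithinAt) (fun s _ => (hh s).hasDerivWithinAt)
      fun s hs => mul_nonneg (by positivity) (sub_nonneg.mpr ?_)
    rw [interior_Ici] at hs
    have := mul_exp_neg_mul_abs_sub_le hμ' hpos hsc u (u + s * δ)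
    rwa [add_sub_cancel_left, abs_mul, abs_of_pos hs, mul_comm s, ← mul_assoc] at this
  have h01 := hmono (Set.mem_Ici.mpr le_rfl) (Set.mem_Ici.mpr zero_le_one) zero_le_one
  simp only [h, zero_mul, one_mul, add_zero, mul_zero, neg_zero, Real.exp_zero, mul_one, hδ,
    add_sub_cancel] at h01
  rw [slope_def_field, sub_div]
  linarith

theorem deriv_le_mul_secant (hM : 0 < M) (hμ : Differentiable ℝ μ)
    (hμ' : Differentiable ℝ (deriv μ)) (hpos : ∀ u, 0 < deriv μ u)
    (hsc : ∀ u, |deriv (deriv μ) u| ≤ M * deriv μ u) {u u' K : ℝ} (hK : |u' - u| ≤ K) :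
    deriv μ u ≤ (1 + M * K) * secant μ u u' := by
  unfold secant
  split_ifs with hne
  · exact le_mul_of_one_le_left (hpos u).le
      (le_add_of_nonneg_right (mul_nonneg hM.le ((abs_nonneg _).trans hK)))
  set a := M * |u' - u|
  have ha : 0 < a := mul_pos hM (abs_pos.mpr (sub_ne_zero.mpr (Ne.symm hne)))
  have hint := deriv_mul_one_sub_exp_le_mul_slope hM.le hμ hμ' hpos hsc hne
  have hexp : (1 + a) * Real.exp (-a) ≤ 1 := by
    calc (1 + a) * Real.exp (-a) ≤ Real.exp a * Real.exp (-a) := by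
          gcongr; linarith [Real.add_one_le_exp a]
      _ = 1 := by rw [← Real.exp_add, add_neg_cancel, Real.exp_zero]
  have hslope : deriv μ u ≤ (1 + a) * slope μ u u' := by
    refine le_of_mul_le_mul_left ?_ ha
    nlinarith [hpos u]
  have hslope_nonneg : 0 ≤ slope μ u u' :=
    nonneg_of_mul_nonneg_right ((hpos u).le.trans hslope) (by positivity)
  exact hslope.trans (by gcongr; exact mul_le_mul_of_nonneg_left hK hM.le)

end SelfConcordant

section RegularizedGram

variable {ι n R : Type*} [Fintype ι] [Fintype n] [DecidableEq n]

def regularizedGram [CommRing R] (c : ι → R) (X : ι → n → R) (lam : R) : Matrix n n R :=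
  ∑ l, c l • vecMulVec (X l) (X l) + lam • 1

theorem dotProduct_regularizedGram_mulVec [CommRing R] (c : ι → R) (X : ι → n → R) (lam : R)
    (x : n → R) :
    x ⬝ᵥ regularizedGram c X lam *ᵥ x = ∑ l, c l * (X l ⬝ᵥ x) ^ 2 + lam * (x ⬝ᵥ x) := by
  simp only [regularizedGram, add_mulVec, sum_mulVec, smul_mulVec, vecMulVec_mulVec,
    one_mulVec, dotProduct_add, dotProduct_sum, dotProduct_smul, smul_eq_mul, op_smul_eq_smul]
  congr 1
  refine Finset.sum_congr rfl fun l _ => ?_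
  rw [dotProduct_comm x (X l)]
  ring

theorem dotProduct_regularizedGram_mulVec_le [CommRing R] [LinearOrder R] [IsStrictOrderedRing R]
    {c c' : ι → R} {K lam : R} (hc : ∀ l, c l ≤ K * c' l) (hK : 1 ≤ K) (hlam : 0 ≤ lam)
    (X : ι → n → R) (x : n → R) :
    x ⬝ᵥ regularizedGram c X lam *ᵥ x ≤ K * (x ⬝ᵥ regularizedGram c' X lam *ᵥ x) := by
  have hxx : 0 ≤ x ⬝ᵥ x := Finset.sum_nonneg fun i _ => mul_self_nonneg (x i)
  rw [dotProduct_regularizedGram_mulVec, dotProduct_regularizedGram_mulVec, mul_add,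
    Finset.mul_sum]
  refine add_le_add (Finset.sum_le_sum fun l _ => ?_) ?_
  · rw [← mul_assoc]
    exact mul_le_mul_of_nonneg_right (hc l) (sq_nonneg _)
  · exact le_mul_of_one_le_left (mul_nonneg hlam hxx) hK

end RegularizedGram

theorem hessian_le_secant_matrix_general
    {d t : ℕ} (M lam : ℝ) (hM : 0 < M) (hlam : 0 < lam)
    (μ : ℝ → ℝ) (hdiff : Differentiable ℝ μ) (hdiff2 : Differentiable ℝ (deriv μ))
    (hpos : ∀ u : ℝ, 0 < deriv μ u)
    (hsc : ∀ u : ℝ, |deriv (deriv μ) u| ≤ M * deriv μ u)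
    (𝒳 : Finset (Fin d → ℝ)) (h𝒳ne : 𝒳.Nonempty)
    (X : Fin t → (Fin d → ℝ)) (hX : ∀ l, X l ∈ 𝒳)
    (α : ℝ → ℝ → ℝ)
    (hα : ∀ u u' : ℝ, α u u' = if u = u' then deriv μ u else (μ u - μ u') / (u - u'))
    (H : (Fin d → ℝ) → Matrix (Fin d) (Fin d) ℝ)
    (hH : ∀ θ, H θ = ∑ l, deriv μ (X l ⬝ᵥ θ) • vecMulVec (X l) (X l)
        + lam • (1 : Matrix (Fin d) (Fin d) ℝ))
    (Q : (Fin d → ℝ) → (Fin d → ℝ) → Matrix (Fin d) (Fin d) ℝ)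
    (hQ : ∀ θ θ', Q θ θ' = ∑ l, α (X l ⬝ᵥ θ) (X l ⬝ᵥ θ') • vecMulVec (X l) (X l)
        + lam • (1 : Matrix (Fin d) (Fin d) ℝ))
    (D : (Fin d → ℝ) → ℝ)
    (hD : ∀ v, D v = 𝒳.sup' h𝒳ne (fun Y => |Y ⬝ᵥ v|)) :
    ∀ θ θ' : Fin d → ℝ,
      Q θ θ' = Q θ' θ ∧
      ∀ x : Fin d → ℝ,
        x ⬝ᵥ (H θ).mulVec x ≤ (1 + M * D (θ - θ')) * (x ⬝ᵥ (Q θ θ').mulVec x) := by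
  intro θ θ'
  obtain rfl : α = secant μ := by
    funext u u'
    rw [hα, secant, slope_comm, slope_def_field]
  have hD_nonneg : 0 ≤ D (θ - θ') := by
    obtain ⟨Y, hY⟩ := h𝒳ne
    rw [hD]
    exact (abs_nonneg _).trans (Finset.le_sup' (fun Y => |Y ⬝ᵥ (θ - θ')|) hY)
  have hdist : ∀ l, |X l ⬝ᵥ θ' - X l ⬝ᵥ θ| ≤ D (θ - θ') := fun l => by
    rw [abs_sub_comm, ← dotProduct_sub, hD]
    exact Finset.le_sup' (fun Y => |Y ⬝ᵥ (θ - θ')|) (hX l)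
  refine ⟨by simp only [hQ, secant_comm μ _ (X _ ⬝ᵥ θ')], fun x => ?_⟩
  rw [hH, hQ]
  exact dotProduct_regularizedGram_mulVec_le
    (fun l => deriv_le_mul_secant hM hdiff hdiff2 hpos hsc (hdist l))
    (le_add_of_nonneg_right (mul_nonneg hM.le hD_nonneg)) hlam.le X x

/-- Loewner-order domination of the GLM Hessian by the secant matrix:
`Q(θ, θ') = Q(θ', θ)` and `H(θ) ⪯ (1 + M·D(θ − θ'))·Q(θ, θ')`. -/
theorem hessian_le_secant_matrix
    {d t : ℕ} (M lam : ℝ) (hM : 0 < M) (hlam : 0 < lam)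
    (μ : ℝ → ℝ) (hdiff : Differentiable ℝ μ) (hdiff2 : Differentiable ℝ (deriv μ))
    (hpos : ∀ u : ℝ, 0 < deriv μ u)
    (hsc : ∀ u : ℝ, |deriv (deriv μ) u| ≤ M * deriv μ u)
    (𝒳 : Finset (Fin d → ℝ)) (h𝒳ne : 𝒳.Nonempty)
    (h𝒳norm : ∀ X ∈ 𝒳, Real.sqrt (∑ i, X i ^ 2) ≤ 1)
    (X : Fin t → (Fin d → ℝ)) (hX : ∀ l, X l ∈ 𝒳)
    (α : ℝ → ℝ → ℝ)
    (hα : ∀ u u' : ℝ, α u u' = if u = u' then deriv μ u else (μ u - μ u') / (u - u'))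
    (H : (Fin d → ℝ) → Matrix (Fin d) (Fin d) ℝ)
    (hH : ∀ θ, H θ = ∑ l, deriv μ (X l ⬝ᵥ θ) • vecMulVec (X l) (X l)
        + lam • (1 : Matrix (Fin d) (Fin d) ℝ))
    (Q : (Fin d → ℝ) → (Fin d → ℝ) → Matrix (Fin d) (Fin d) ℝ)
    (hQ : ∀ θ θ', Q θ θ' = ∑ l, α (X l ⬝ᵥ θ) (X l ⬝ᵥ θ') • vecMulVec (X l) (X l)
        + lam • (1 : Matrix (Fin d) (Fin d) ℝ))
    (D : (Fin d → ℝ) → ℝ)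
    (hD : ∀ v, D v = 𝒳.sup' h𝒳ne (fun Y => |Y ⬝ᵥ v|)) :
    ∀ θ θ' : Fin d → ℝ,
      Q θ θ' = Q θ' θ ∧
      ∀ x : Fin d → ℝ,
        x ⬝ᵥ (H θ).mulVec x ≤ (1 + M * D (θ - θ')) * (x ⬝ᵥ (Q θ θ').mulVec x) :=
  hessian_le_secant_matrix_general M lam hM hlam μ hdiff hdiff2 hpos hsc 𝒳 h𝒳ne X hX α hα H hH Q hQ
    D hD
end

section
/- With the GLM notation below, for all θ, θ' ∈ ℝ^d one has ‖θ − θ'‖_{H(θ')} ≤ (1 + M·D(θ − θ'))·‖f_t(θ) − f_t(θ')‖_{H(θ')⁻¹}, where for a positive definite matrix A, ‖v‖_A = √(vᵀAv). -/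
/-!
Self-concordance says that `log μ'` is `M`-Lipschitz, so `μ'(u + s) ≥ μ'(u) e^{-M|s|}`.
Integrating, and using `1 - e^{-x} ≥ x / (1 + x)`, gives the chord bound
`μ'(u) a² ≤ (1 + M|a|) (μ(u + a) - μ(u)) a`. Applied with `u = X_lᵀθ'`, `a = X_lᵀ(θ - θ')`,
`|a| ≤ D(θ - θ')`, and summed over `l`, it yields
`‖θ - θ'‖²_{H(θ')} ≤ (1 + M D(θ - θ')) (θ - θ')ᵀ(f_t θ - f_t θ')`; Cauchy–Schwarz for the
`H(θ')`-inner product bounds the right-hand side by `‖θ - θ'‖_{H(θ')} ‖f_t θ - f_t θ'‖_{H(θ')⁻¹}`.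
-/

open Matrix Real

theorem lipschitzWith_log_of_abs_deriv_le {g : ℝ → ℝ} {M : ℝ} (hM : 0 ≤ M)
    (hg : Differentiable ℝ g) (hpos : ∀ u, 0 < g u) (hbound : ∀ u, |deriv g u| ≤ M * g u) :
    LipschitzWith M.toNNReal (fun s => log (g s)) := by
  refine lipschitzWith_of_nnnorm_deriv_le (fun s => (hg s).log (hpos s).ne') fun s => ?_
  rw [((hg s).hasDerivAt.log (hpos s).ne').deriv, ← NNReal.coe_le_coe, coe_nnnorm,
    Real.coe_toNNReal _ hM, Real.norm_eq_abs, abs_div, abs_of_pos (hpos s), div_le_iff₀ (hpos s)]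
  exact hbound s

theorem mul_exp_neg_mul_abs_le_of_abs_deriv_le {g : ℝ → ℝ} {M : ℝ} (hM : 0 ≤ M)
    (hg : Differentiable ℝ g) (hpos : ∀ u, 0 < g u) (hbound : ∀ u, |deriv g u| ≤ M * g u)
    (u z : ℝ) : g u * exp (-(M * |z|)) ≤ g (u + z) := by
  have hlog : log (g u) - M * |z| ≤ log (g (u + z)) := by
    have := (lipschitzWith_log_of_abs_deriv_le hM hg hpos hbound).dist_le_mul (u + z) u
    rw [Real.dist_eq, Real.dist_eq, Real.coe_toNNReal _ hM, add_sub_cancel_left] at this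
    linarith [neg_abs_le (log (g (u + z)) - log (g u))]
  calc g u * exp (-(M * |z|)) = exp (log (g u) - M * |z|) := by
        rw [exp_sub, exp_log (hpos u), exp_neg, div_eq_mul_inv]
    _ ≤ g (u + z) := by simpa only [exp_log (hpos _)] using exp_le_exp.2 hlog

theorem div_one_add_le_one_sub_exp_neg {x : ℝ} (hx : 0 ≤ x) : x / (1 + x) ≤ 1 - exp (-x) := by
  have h := add_one_le_exp x
  rw [div_le_iff₀ (by positivity), exp_neg, sub_mul, one_mul, le_sub_comm, add_sub_cancel_right,
    inv_mul_le_iff₀ (exp_pos x)]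
  linarith

theorem mul_sq_le_of_exp_le_deriv_of_nonneg {g : ℝ → ℝ} (hg : Differentiable ℝ g)
    {K M a : ℝ} (hK : 0 ≤ K) (hM : 0 < M) (ha : 0 ≤ a)
    (hbound : ∀ s, 0 ≤ s → K * exp (-(M * s)) ≤ deriv g s) :
    K * a ^ 2 ≤ (1 + M * a) * (a * (g a - g 0)) := by
  set ψ : ℝ → ℝ := fun s => K / M * (1 - exp (-(M * s)))
  have hψ : ∀ s, HasDerivAt ψ (K * exp (-(M * s))) s := fun s =>
    ((((hasDerivAt_id s).const_mul M).neg.exp.const_sub 1).const_mul (K / M)).congr_deriv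
      (by simp only [id, mul_one, Pi.neg_apply]; field_simp)
  have hmono : MonotoneOn (fun s => g s - ψ s) (Set.Ici 0) := by
    have hd : Differentiable ℝ (fun s => g s - ψ s) := hg.sub fun s => (hψ s).differentiableAt
    refine monotoneOn_of_deriv_nonneg (convex_Ici 0) hd.continuous.continuousOn
      hd.differentiableOn fun s hs => ?_
    rw [interior_Ici] at hs
    rw [deriv_fun_sub (hg s) (hψ s).differentiableAt, (hψ s).deriv]
    exact sub_nonneg.2 (hbound s (le_of_lt hs))
  have hchord : ψ a ≤ g a - g 0 := by
    have := hmono Set.self_mem_Ici ha ha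
    simp only [ψ, mul_zero, neg_zero, exp_zero, sub_self, sub_zero] at this ⊢
    linarith
  have hψa : K * a / (1 + M * a) ≤ ψ a := by
    calc K * a / (1 + M * a) = K / M * (M * a / (1 + M * a)) := by field_simp
      _ ≤ ψ a := mul_le_mul_of_nonneg_left (div_one_add_le_one_sub_exp_neg (by positivity))
          (by positivity)
  rw [div_le_iff₀ (by positivity)] at hψa
  nlinarith [mul_le_mul_of_nonneg_right hchord (by positivity : 0 ≤ 1 + M * a)]

theorem mul_sq_le_of_exp_le_deriv {g : ℝ → ℝ} (hg : Differentiable ℝ g) {K M : ℝ} (hK : 0 ≤ K)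
    (hM : 0 < M) (hbound : ∀ s, K * exp (-(M * |s|)) ≤ deriv g s) (a : ℝ) :
    K * a ^ 2 ≤ (1 + M * |a|) * (a * (g a - g 0)) := by
  rcases le_total 0 a with ha | ha
  · rw [abs_of_nonneg ha]
    exact mul_sq_le_of_exp_le_deriv_of_nonneg hg hK hM ha fun s hs => by
      simpa only [abs_of_nonneg hs] using hbound s
  · -- `s ↦ -g (-s)` satisfies the same derivative bound and moves the chord to `[0, -a]`.
    have hrefl := mul_sq_le_of_exp_le_deriv_of_nonneg (g := fun s => -g (-s))
      (hg.comp differentiable_neg).neg hK hM (neg_nonneg.2 ha) fun s hs => by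
        rw [deriv.fun_neg, deriv_comp_neg, neg_neg]
        simpa only [abs_neg, abs_of_nonneg hs] using hbound (-s)
    rw [abs_of_nonpos ha]
    simp only [neg_neg, neg_zero, neg_sq] at hrefl
    linarith

theorem deriv_mul_sq_le_of_abs_le {μ : ℝ → ℝ} {M : ℝ} (hM : 0 < M) (hdiff : Differentiable ℝ μ)
    (hdiff2 : Differentiable ℝ (deriv μ)) (hpos : ∀ u, 0 < deriv μ u)
    (hsc : ∀ u, |deriv (deriv μ) u| ≤ M * deriv μ u) (u : ℝ) {a c : ℝ} (hac : |a| ≤ c) :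
    deriv μ u * a ^ 2 ≤ (1 + M * c) * ((μ (u + a) - μ u) * a) := by
  have h := mul_sq_le_of_exp_le_deriv (g := fun s => μ (u + s))
    (hdiff.comp (differentiable_id.const_add u)) (hpos u).le hM
    (fun s => by
      rw [deriv_comp_const_add]
      exact mul_exp_neg_mul_abs_le_of_abs_deriv_le hM.le hdiff2 hpos hsc u s) a
  simp only [add_zero] at h
  have hchord : 0 ≤ a * (μ (u + a) - μ u) := by
    refine nonneg_of_mul_nonneg_right ((mul_nonneg (hpos u).le (sq_nonneg a)).trans h) ?_
    positivity
  nlinarith [mul_le_mul_of_nonneg_left hac hM.le]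

section Matrix

variable {n : Type*} [Fintype n]

theorem Matrix.PosSemidef.dotProduct_mulVec_self_nonneg {A : Matrix n n ℝ} (hA : A.PosSemidef)
    (x : n → ℝ) : 0 ≤ x ⬝ᵥ A *ᵥ x := by
  simpa only [star_trivial] using hA.dotProduct_mulVec_nonneg x

variable [DecidableEq n]

theorem Matrix.PosSemidef.dotProduct_mulVec_sq_le {A : Matrix n n ℝ} (hA : A.PosSemidef)
    (x y : n → ℝ) : (x ⬝ᵥ A *ᵥ y) ^ 2 ≤ (x ⬝ᵥ A *ᵥ x) * (y ⬝ᵥ A *ᵥ y) := by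
  have hsymm : LinearMap.IsSymm A.toBilin' := LinearMap.BilinForm.isSymm_iff.1 <|
    Matrix.isSymm_toBilin'_iff_isSymm.2 (isHermitian_iff_isSymm.1 hA.isHermitian)
  simpa only [Matrix.toBilin'_apply'] using A.toBilin'.apply_sq_le_of_symm
    (fun v => by simpa only [Matrix.toBilin'_apply'] using hA.dotProduct_mulVec_self_nonneg v)
    hsymm x y

theorem Matrix.PosDef.dotProduct_le_sqrt_mul_sqrt_inv {A : Matrix n n ℝ} (hA : A.PosDef)
    (x y : n → ℝ) : x ⬝ᵥ y ≤ √(x ⬝ᵥ A *ᵥ x) * √(y ⬝ᵥ A⁻¹ *ᵥ y) := by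
  have hAA : A *ᵥ (A⁻¹ *ᵥ y) = y := by
    rw [mulVec_mulVec, mul_nonsing_inv _ hA.det_pos.ne'.isUnit, one_mulVec]
  have hcs := hA.posSemidef.dotProduct_mulVec_sq_le x (A⁻¹ *ᵥ y)
  rw [hAA, dotProduct_comm (A⁻¹ *ᵥ y)] at hcs
  rw [← sqrt_mul (hA.posSemidef.dotProduct_mulVec_self_nonneg x)]
  exact (le_abs_self _).trans (abs_le_sqrt hcs)

theorem Matrix.PosDef.sqrt_dotProduct_mulVec_le_of_le_mul_dotProduct {A : Matrix n n ℝ}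
    (hA : A.PosDef) {c : ℝ} (hc : 0 ≤ c) {x y : n → ℝ} (h : x ⬝ᵥ A *ᵥ x ≤ c * (x ⬝ᵥ y)) :
    √(x ⬝ᵥ A *ᵥ x) ≤ c * √(y ⬝ᵥ A⁻¹ *ᵥ y) := by
  have hsq : √(x ⬝ᵥ A *ᵥ x) * √(x ⬝ᵥ A *ᵥ x) ≤ √(x ⬝ᵥ A *ᵥ x) * (c * √(y ⬝ᵥ A⁻¹ *ᵥ y)) := by
    rw [mul_self_sqrt (hA.posSemidef.dotProduct_mulVec_self_nonneg x), mul_left_comm]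
    exact h.trans (mul_le_mul_of_nonneg_left (hA.dotProduct_le_sqrt_mul_sqrt_inv x y) hc)
  rcases (sqrt_nonneg (x ⬝ᵥ A *ᵥ x)).eq_or_lt with h0 | hpos
  · rw [← h0]
    positivity
  · exact le_of_mul_le_mul_left hsq hpos

theorem posDef_sum_smul_vecMulVec_add_smul_one {ι : Type*} [Fintype ι] {w : ι → ℝ}
    (hw : ∀ i, 0 ≤ w i) (x : ι → n → ℝ) {lam : ℝ} (hlam : 0 < lam) :
    (∑ i, w i • vecMulVec (x i) (x i) + lam • (1 : Matrix n n ℝ)).PosDef :=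
  (PosDef.one.smul hlam).posSemidef_add
    (posSemidef_sum _ fun i _ => by
      simpa only [star_trivial] using (posSemidef_vecMulVec_self_star (x i)).smul (hw i))

theorem dotProduct_sum_smul_vecMulVec_add_smul_one_mulVec {ι : Type*} [Fintype ι] (w : ι → ℝ)
    (x : ι → n → ℝ) (lam : ℝ) (v : n → ℝ) :
    v ⬝ᵥ (∑ i, w i • vecMulVec (x i) (x i) + lam • (1 : Matrix n n ℝ)) *ᵥ v
      = ∑ i, w i * (x i ⬝ᵥ v) ^ 2 + lam * (v ⬝ᵥ v) := by
  simp only [add_mulVec, sum_mulVec, smul_mulVec, vecMulVec_mulVec, one_mulVec, dotProduct_add,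
    dotProduct_sum, dotProduct_smul, op_smul_eq_smul, smul_eq_mul]
  congr 1
  exact Finset.sum_congr rfl fun i _ => by rw [dotProduct_comm v, sq]

end Matrix

theorem dist_H_le_grad_diff_general
    {d t : ℕ} (M lam : ℝ) (hM : 0 < M) (hlam : 0 < lam)
    (μ : ℝ → ℝ) (hdiff : Differentiable ℝ μ) (hdiff2 : Differentiable ℝ (deriv μ))
    (hpos : ∀ u : ℝ, 0 < deriv μ u)
    (hsc : ∀ u : ℝ, |deriv (deriv μ) u| ≤ M * deriv μ u)
    (𝒳 : Finset (Fin d → ℝ)) (h𝒳ne : 𝒳.Nonempty)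
    (X : Fin t → (Fin d → ℝ)) (hX : ∀ l, X l ∈ 𝒳)
    (H : (Fin d → ℝ) → Matrix (Fin d) (Fin d) ℝ)
    (hH : ∀ θ, H θ = ∑ l, deriv μ (X l ⬝ᵥ θ) • vecMulVec (X l) (X l)
        + lam • (1 : Matrix (Fin d) (Fin d) ℝ))
    (f : (Fin d → ℝ) → (Fin d → ℝ))
    (hf : ∀ θ, f θ = ∑ l, μ (X l ⬝ᵥ θ) • X l + lam • θ)
    (D : (Fin d → ℝ) → ℝ)
    (hD : ∀ v, D v = 𝒳.sup' h𝒳ne (fun Y => |Y ⬝ᵥ v|)) :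
    ∀ θ θ' : Fin d → ℝ,
      Real.sqrt ((θ - θ') ⬝ᵥ (H θ').mulVec (θ - θ'))
        ≤ (1 + M * D (θ - θ')) *
          Real.sqrt ((f θ - f θ') ⬝ᵥ (H θ')⁻¹.mulVec (f θ - f θ')) := by
  intro θ θ'
  have hDΔ : ∀ Y ∈ 𝒳, |Y ⬝ᵥ (θ - θ')| ≤ D (θ - θ') := fun Y hY =>
    hD (θ - θ') ▸ Finset.le_sup' (fun Y => |Y ⬝ᵥ (θ - θ')|) hY
  have hMD : 0 ≤ M * D (θ - θ') :=
    mul_nonneg hM.le ((abs_nonneg _).trans (hDΔ _ h𝒳ne.choose_spec))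
  have hgrad : (θ - θ') ⬝ᵥ (f θ - f θ') = ∑ l, (μ (X l ⬝ᵥ θ) - μ (X l ⬝ᵥ θ')) * (X l ⬝ᵥ (θ - θ'))
      + lam * ((θ - θ') ⬝ᵥ (θ - θ')) := by
    simp_rw [hf, add_sub_add_comm, ← Finset.sum_sub_distrib, ← sub_smul, ← smul_sub]
    rw [dotProduct_comm, add_dotProduct, sum_dotProduct]
    simp only [smul_dotProduct, smul_eq_mul]
  have hΔΔ : 0 ≤ (θ - θ') ⬝ᵥ (θ - θ') := Finset.sum_nonneg fun i _ => mul_self_nonneg _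
  have hHpos : (H θ').PosDef :=
    hH θ' ▸ posDef_sum_smul_vecMulVec_add_smul_one (fun l => (hpos _).le) X hlam
  refine hHpos.sqrt_dotProduct_mulVec_le_of_le_mul_dotProduct
    (add_nonneg zero_le_one hMD) ?_
  rw [hH, dotProduct_sum_smul_vecMulVec_add_smul_one_mulVec, hgrad, mul_add, Finset.mul_sum]
  refine add_le_add (Finset.sum_le_sum fun l _ => ?_)
    (le_mul_of_one_le_left (mul_nonneg hlam.le hΔΔ) (le_add_of_nonneg_right hMD))
  have h := deriv_mul_sq_le_of_abs_le hM hdiff hdiff2 hpos hsc (X l ⬝ᵥ θ') (hDΔ _ (hX l))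
  simpa only [dotProduct_sub, add_sub_cancel] using h

/-- GLM parameter-distance bound:
`‖θ − θ'‖_{H(θ')} ≤ (1 + M·D(θ − θ'))·‖f_t(θ) − f_t(θ')‖_{H(θ')⁻¹}`. -/
theorem dist_H_le_grad_diff
    {d t : ℕ} (M lam : ℝ) (hM : 0 < M) (hlam : 0 < lam)
    (μ : ℝ → ℝ) (hdiff : Differentiable ℝ μ) (hdiff2 : Differentiable ℝ (deriv μ))
    (hpos : ∀ u : ℝ, 0 < deriv μ u)
    (hsc : ∀ u : ℝ, |deriv (deriv μ) u| ≤ M * deriv μ u)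
    (𝒳 : Finset (Fin d → ℝ)) (h𝒳ne : 𝒳.Nonempty)
    (h𝒳norm : ∀ X ∈ 𝒳, Real.sqrt (∑ i, X i ^ 2) ≤ 1)
    (X : Fin t → (Fin d → ℝ)) (hX : ∀ l, X l ∈ 𝒳)
    (H : (Fin d → ℝ) → Matrix (Fin d) (Fin d) ℝ)
    (hH : ∀ θ, H θ = ∑ l, deriv μ (X l ⬝ᵥ θ) • vecMulVec (X l) (X l)
        + lam • (1 : Matrix (Fin d) (Fin d) ℝ))
    (f : (Fin d → ℝ) → (Fin d → ℝ))
    (hf : ∀ θ, f θ = ∑ l, μ (X l ⬝ᵥ θ) • X l + lam • θ)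
    (D : (Fin d → ℝ) → ℝ)
    (hD : ∀ v, D v = 𝒳.sup' h𝒳ne (fun Y => |Y ⬝ᵥ v|)) :
    ∀ θ θ' : Fin d → ℝ,
      Real.sqrt ((θ - θ') ⬝ᵥ (H θ').mulVec (θ - θ'))
        ≤ (1 + M * D (θ - θ')) *
          Real.sqrt ((f θ - f θ') ⬝ᵥ (H θ')⁻¹.mulVec (f θ - f θ')) :=
  dist_H_le_grad_diff_general M lam hM hlam μ hdiff hdiff2 hpos hsc 𝒳 h𝒳ne X hX H hH f hf D hD
end

section
/- With the GLM notation below, for all θ, θ' ∈ ℝ^d, setting γ = ‖f_t(θ) − f_t(θ')‖_{H(θ')⁻¹}, one has ‖θ − θ'‖₂ ≤ M·γ²/λ + γ/√λ. -/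
/-!
With `Δ = θ - θ'`, the fundamental theorem of calculus writes `f_t(θ) - f_t(θ') = G Δ`, where `G` is
the regularized Gram matrix of the `X_l` weighted by the means `α_l` of `μ'` over the segments
`[X_lᵀθ', X_lᵀθ]`. Self-concordance gives `μ'(X_lᵀθ') ≤ (1 + M‖Δ‖) α_l`, hence
`H(θ') ≼ (1 + M‖Δ‖) G`, and Cauchy–Schwarz in the geometry of `H(θ')` turns this into
`ΔᵀGΔ ≤ (1 + M‖Δ‖) γ²`. As `λ‖Δ‖² ≤ ΔᵀGΔ`, the norm `‖Δ‖` satisfies a quadratic inequality whose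
root is at most `Mγ²/λ + γ/√λ`.
-/

open Matrix intervalIntegral

theorem le_one_add_mul_integral_of_neg_mul_le_deriv {g : ℝ → ℝ} {c : ℝ}
    (hg : Differentiable ℝ g) (hg0 : ∀ s, 0 ≤ g s) (hc : 0 ≤ c)
    (hg' : ∀ s, -(c * g s) ≤ deriv g s) :
    g 0 ≤ (1 + c) * ∫ s in (0:ℝ)..1, g s := by
  set F : ℝ → ℝ := fun s => ∫ r in (0:ℝ)..s, g r
  have hF : ∀ s, HasDerivAt F (g s) s := fun s =>
    (hg.continuous.integral_hasStrictDerivAt 0 s).hasDerivAt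
  have hmono : Monotone fun s => g s + c * F s :=
    monotone_of_deriv_nonneg (hg.add (fun s => (hF s).differentiableAt.const_mul c))
      fun s => by
        have hd : HasDerivAt (fun s => g s + c * F s) (deriv g s + c * g s) s :=
          (hg s).hasDerivAt.add ((hF s).const_mul c)
        rw [hd.deriv]
        linarith [hg' s]
  have hF_le : ∀ s ∈ Set.Icc (0:ℝ) 1, F s ≤ F 1 := fun s hs => by
    simp only [F, ← integral_add_adjacent_intervals (hg.continuous.intervalIntegrable 0 s)
      (hg.continuous.intervalIntegrable s 1)]
    exact le_add_of_nonneg_right (integral_nonneg hs.2 fun r _ => hg0 r)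
  have hlower : ∀ s ∈ Set.Icc (0:ℝ) 1, g 0 - c * F 1 ≤ g s := fun s hs => by
    have h0 := hmono hs.1
    simp only [F, integral_same, mul_zero, add_zero] at h0
    nlinarith [hF_le s hs]
  have hint := integral_mono_on (μ := MeasureTheory.volume) zero_le_one intervalIntegrable_const
    (hg.continuous.intervalIntegrable 0 1) hlower
  simp only [integral_const, sub_zero, smul_eq_mul, one_mul] at hint
  linarith

noncomputable def avgDeriv (μ : ℝ → ℝ) (x y : ℝ) : ℝ :=
  ∫ s in (0:ℝ)..1, deriv μ (x + s * (y - x))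

section avgDeriv

variable {μ : ℝ → ℝ}

theorem hasDerivAt_comp_lineMap (hμ : Differentiable ℝ μ) (x y s : ℝ) :
    HasDerivAt (fun s => μ (x + s * (y - x))) (deriv μ (x + s * (y - x)) * (y - x)) s :=
  (hμ _).hasDerivAt.comp s (((hasDerivAt_id s).mul_const (y - x)).const_add x |>.congr_deriv
    (one_mul _))

theorem sub_eq_avgDeriv_mul (hμ : Differentiable ℝ μ) (hμ' : Continuous (deriv μ)) (x y : ℝ) :
    μ y - μ x = avgDeriv μ x y * (y - x) := by
  rw [avgDeriv, ← integral_mul_const, integral_eq_sub_of_hasDerivAt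
    (fun s _ => hasDerivAt_comp_lineMap hμ x y s)
    ((hμ'.comp (by fun_prop)).mul continuous_const |>.intervalIntegrable 0 1)]
  simp

theorem avgDeriv_nonneg (hpos : ∀ u, 0 ≤ deriv μ u) (x y : ℝ) : 0 ≤ avgDeriv μ x y :=
  integral_nonneg zero_le_one fun _ _ => hpos _

theorem deriv_le_one_add_mul_abs_mul_avgDeriv {M : ℝ} (hM : 0 ≤ M)
    (hμ' : Differentiable ℝ (deriv μ)) (hpos : ∀ u, 0 ≤ deriv μ u)
    (hsc : ∀ u, |deriv (deriv μ) u| ≤ M * deriv μ u) (x y : ℝ) :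
    deriv μ x ≤ (1 + M * |y - x|) * avgDeriv μ x y := by
  have := le_one_add_mul_integral_of_neg_mul_le_deriv (g := fun s => deriv μ (x + s * (y - x)))
    (hμ'.comp (by fun_prop)) (fun _ => hpos _) (mul_nonneg hM (abs_nonneg _)) fun s => by
      rw [(hasDerivAt_comp_lineMap hμ' x y s).deriv]
      set p := x + s * (y - x)
      have h : |deriv (deriv μ) p * (y - x)| ≤ M * |y - x| * deriv μ p := by
        rw [abs_mul, mul_right_comm]
        exact mul_le_mul_of_nonneg_right (hsc p) (abs_nonneg _)
      linarith [neg_abs_le (deriv (deriv μ) p * (y - x))]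
  simpa only [avgDeriv, sub_self, zero_mul, add_zero] using this

end avgDeriv

theorem abs_dotProduct_le_sqrt_mul_sqrt {n : Type*} [Fintype n] (x y : n → ℝ) :
    |x ⬝ᵥ y| ≤ √(∑ i, x i ^ 2) * √(∑ i, y i ^ 2) := by
  refine abs_le.mpr ⟨?_, Real.sum_mul_le_sqrt_mul_sqrt _ x y⟩
  have := Real.sum_mul_le_sqrt_mul_sqrt Finset.univ (-x) y
  simp only [Pi.neg_apply, neg_mul, Finset.sum_neg_distrib, neg_sq] at this
  exact neg_le.mpr this

section PosDef

variable {n : Type*} [Fintype n] [DecidableEq n] {A : Matrix n n ℝ}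

theorem sq_dotProduct_le_of_posDef (hA : A.PosDef) (z v : n → ℝ) :
    (z ⬝ᵥ v) ^ 2 ≤ (z ⬝ᵥ (A *ᵥ z)) * (v ⬝ᵥ (A⁻¹ *ᵥ v)) := by
  set w := A⁻¹ *ᵥ v
  have hAw : A *ᵥ w = v := by
    rw [mulVec_mulVec, mul_nonsing_inv _ ((isUnit_iff_isUnit_det _).1 hA.isUnit), one_mulVec]
  have hsymm : w ⬝ᵥ (A *ᵥ z) = z ⬝ᵥ v := by
    rw [dotProduct_mulVec, ← mulVec_transpose, ← conjTranspose_eq_transpose_of_trivial,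
      hA.isHermitian.eq, dotProduct_comm, hAw]
  -- The quadratic `s ↦ (s z + w)ᵀ A (s z + w)` is nonnegative, so its discriminant is not positive.
  have hdisc := discrim_le_zero (a := z ⬝ᵥ (A *ᵥ z)) (b := 2 * (z ⬝ᵥ v)) (c := v ⬝ᵥ w) fun s => by
    have := hA.posSemidef.dotProduct_mulVec_nonneg (s • z + w)
    simp only [star_trivial, mulVec_add, mulVec_smul, add_dotProduct, dotProduct_add,
      smul_dotProduct, dotProduct_smul, smul_eq_mul, hAw, hsymm] at this
    rw [dotProduct_comm w v] at this
    linarith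
  rw [discrim] at hdisc
  linarith

theorem dotProduct_le_mul_dotProduct_inv_mulVec (hA : A.PosDef) {k : ℝ} (hk : 0 ≤ k)
    {z v : n → ℝ} (h : z ⬝ᵥ (A *ᵥ z) ≤ k * (z ⬝ᵥ v)) :
    z ⬝ᵥ v ≤ k * (v ⬝ᵥ (A⁻¹ *ᵥ v)) := by
  have hq : 0 ≤ v ⬝ᵥ (A⁻¹ *ᵥ v) := by
    simpa only [star_trivial] using hA.inv.posSemidef.dotProduct_mulVec_nonneg v
  rcases le_or_gt (z ⬝ᵥ v) 0 with hneg | hpos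
  · exact hneg.trans (mul_nonneg hk hq)
  · have := (sq_dotProduct_le_of_posDef hA z v).trans (mul_le_mul_of_nonneg_right h hq)
    rw [sq, mul_assoc, mul_left_comm] at this
    exact le_of_mul_le_mul_left this hpos

end PosDef

section WeightedGram

variable {ι n : Type*} [Fintype ι] [Fintype n] [DecidableEq n]

def weightedGram (X : ι → n → ℝ) (lam : ℝ) (c : ι → ℝ) : Matrix n n ℝ :=
  ∑ l, c l • vecMulVec (X l) (X l) + lam • 1

variable (X : ι → n → ℝ) (lam : ℝ) (c : ι → ℝ)

theorem weightedGram_mulVec (w : n → ℝ) :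
    weightedGram X lam c *ᵥ w = ∑ l, (c l * (X l ⬝ᵥ w)) • X l + lam • w := by
  simp only [weightedGram, add_mulVec, smul_mulVec, one_mulVec, sum_mulVec, vecMulVec_mulVec,
    op_smul_eq_smul, smul_smul]

theorem dotProduct_weightedGram_mulVec (z w : n → ℝ) :
    z ⬝ᵥ (weightedGram X lam c *ᵥ w) =
      ∑ l, c l * ((X l ⬝ᵥ z) * (X l ⬝ᵥ w)) + lam * (z ⬝ᵥ w) := by
  rw [weightedGram_mulVec, dotProduct_add, dotProduct_sum, dotProduct_smul, smul_eq_mul]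
  congr 1
  exact Finset.sum_congr rfl fun l _ => by
    rw [dotProduct_smul, smul_eq_mul, dotProduct_comm z]
    ring

variable {X lam c}

theorem weightedGram_posDef (hc : ∀ l, 0 ≤ c l) (hlam : 0 < lam) :
    (weightedGram X lam c).PosDef :=
  PosDef.posSemidef_add
    (posSemidef_sum _ fun l _ => (posSemidef_vecMulVec_self_star (X l)).smul (hc l))
    (PosDef.one.smul hlam)

theorem mul_dotProduct_self_le_dotProduct_weightedGram_mulVec (hc : ∀ l, 0 ≤ c l)
    (z : n → ℝ) : lam * (z ⬝ᵥ z) ≤ z ⬝ᵥ (weightedGram X lam c *ᵥ z) := by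
  rw [dotProduct_weightedGram_mulVec]
  exact le_add_of_nonneg_left
    (Finset.sum_nonneg fun l _ => mul_nonneg (hc l) (mul_self_nonneg _))

theorem dotProduct_weightedGram_mulVec_le {c' : ι → ℝ} {k : ℝ} (hk : 1 ≤ k) (hlam : 0 ≤ lam)
    (hc : ∀ l, c l ≤ k * c' l) (z : n → ℝ) :
    z ⬝ᵥ (weightedGram X lam c *ᵥ z) ≤ k * (z ⬝ᵥ (weightedGram X lam c' *ᵥ z)) := by
  rw [dotProduct_weightedGram_mulVec, dotProduct_weightedGram_mulVec, mul_add, Finset.mul_sum]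
  refine add_le_add (Finset.sum_le_sum fun l _ => ?_) ?_ <;> rw [← mul_assoc k]
  · exact mul_le_mul_of_nonneg_right (hc l) (mul_self_nonneg _)
  · exact mul_le_mul_of_nonneg_right (le_mul_of_one_le_left hlam hk)
      (Finset.sum_nonneg fun i _ => mul_self_nonneg (z i))

end WeightedGram

section GLM

variable {ι n : Type*} [Fintype ι] [Fintype n] [DecidableEq n]

def glmGrad (X : ι → n → ℝ) (lam : ℝ) (μ : ℝ → ℝ) (θ : n → ℝ) : n → ℝ :=
  ∑ l, μ (X l ⬝ᵥ θ) • X l + lam • θ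

noncomputable def glmHessian (X : ι → n → ℝ) (lam : ℝ) (μ : ℝ → ℝ) (θ : n → ℝ) : Matrix n n ℝ :=
  weightedGram X lam fun l => deriv μ (X l ⬝ᵥ θ)

variable {μ : ℝ → ℝ} {X : ι → n → ℝ} {lam : ℝ}

theorem glmGrad_sub_glmGrad (hμ : Differentiable ℝ μ) (hμ' : Continuous (deriv μ))
    (θ θ' : n → ℝ) :
    glmGrad X lam μ θ - glmGrad X lam μ θ' =
      weightedGram X lam (fun l => avgDeriv μ (X l ⬝ᵥ θ') (X l ⬝ᵥ θ)) *ᵥ (θ - θ') := by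
  simp only [weightedGram_mulVec, dotProduct_sub, ← sub_eq_avgDeriv_mul hμ hμ', glmGrad,
    sub_smul, Finset.sum_sub_distrib, smul_sub]
  abel

theorem glmHessian_posDef (hpos : ∀ u, 0 ≤ deriv μ u) (hlam : 0 < lam) (θ : n → ℝ) :
    (glmHessian X lam μ θ).PosDef :=
  weightedGram_posDef (fun _ => hpos _) hlam

theorem mul_sq_le_one_add_mul_dotProduct_glmHessian_inv_mulVec {M : ℝ} (hM : 0 ≤ M)
    (hlam : 0 < lam) (hμ : Differentiable ℝ μ) (hμ' : Differentiable ℝ (deriv μ))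
    (hpos : ∀ u, 0 ≤ deriv μ u) (hsc : ∀ u, |deriv (deriv μ) u| ≤ M * deriv μ u)
    (hX : ∀ l, √(∑ i, X l i ^ 2) ≤ 1) (θ θ' : n → ℝ) :
    lam * √(∑ i, (θ i - θ' i) ^ 2) ^ 2 ≤ (1 + M * √(∑ i, (θ i - θ' i) ^ 2)) *
      ((glmGrad X lam μ θ - glmGrad X lam μ θ') ⬝ᵥ
        ((glmHessian X lam μ θ')⁻¹ *ᵥ (glmGrad X lam μ θ - glmGrad X lam μ θ'))) := by
  set u := √(∑ i, (θ i - θ' i) ^ 2)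
  set v := glmGrad X lam μ θ - glmGrad X lam μ θ'
  set α := fun l => avgDeriv μ (X l ⬝ᵥ θ') (X l ⬝ᵥ θ)
  have hv : v = weightedGram X lam α *ᵥ (θ - θ') := glmGrad_sub_glmGrad hμ hμ'.continuous θ θ'
  have hu2 : (θ - θ') ⬝ᵥ (θ - θ') = u ^ 2 := by
    rw [Real.sq_sqrt (by positivity)]
    simp [dotProduct, sq]
  have hXu : ∀ l, |X l ⬝ᵥ θ - X l ⬝ᵥ θ'| ≤ u := fun l => by
    rw [← dotProduct_sub]
    exact (abs_dotProduct_le_sqrt_mul_sqrt _ _).trans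
      (mul_le_of_le_one_left (Real.sqrt_nonneg _) (hX l))
  have hcmp : ∀ l, deriv μ (X l ⬝ᵥ θ') ≤ (1 + M * u) * α l := fun l =>
    (deriv_le_one_add_mul_abs_mul_avgDeriv hM hμ' hpos hsc _ _).trans <|
      mul_le_mul_of_nonneg_right (by gcongr; exact hXu l) (avgDeriv_nonneg hpos _ _)
  have hloewner : (θ - θ') ⬝ᵥ (glmHessian X lam μ θ' *ᵥ (θ - θ')) ≤
      (1 + M * u) * ((θ - θ') ⬝ᵥ v) := by
    rw [hv]
    exact dotProduct_weightedGram_mulVec_le (le_add_of_nonneg_right (by positivity)) hlam.le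
      hcmp _
  have hlower : lam * u ^ 2 ≤ (θ - θ') ⬝ᵥ v := by
    rw [← hu2, hv]
    exact mul_dotProduct_self_le_dotProduct_weightedGram_mulVec
      (fun _ => avgDeriv_nonneg hpos _ _) _
  exact hlower.trans <| dotProduct_le_mul_dotProduct_inv_mulVec
    (glmHessian_posDef hpos hlam θ') (by positivity) hloewner

end GLM

theorem le_mul_sq_div_add_div_sqrt {M lam u γ : ℝ} (hM : 0 ≤ M) (hlam : 0 < lam) (hγ : 0 ≤ γ)
    (h : lam * u ^ 2 ≤ (1 + M * u) * γ ^ 2) : u ≤ M * γ ^ 2 / lam + γ / √lam := by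
  set a := γ / √lam
  have ha : 0 ≤ a := by positivity
  have hγa : γ ^ 2 = a ^ 2 * lam := by
    rw [div_pow, Real.sq_sqrt hlam.le, div_mul_cancel₀ _ hlam.ne']
  rw [hγa, mul_div_assoc, mul_div_cancel_right₀ _ hlam.ne']
  rw [hγa, mul_comm lam, ← mul_assoc, mul_comm _ (a ^ 2)] at h
  have h' : u ^ 2 ≤ a ^ 2 * (1 + M * u) := le_of_mul_le_mul_right h hlam
  nlinarith [mul_nonneg hM (mul_nonneg ha ha)]

theorem euclidean_dist_le_of_grad_diff_general
    {d t : ℕ} (M lam : ℝ) (hM : 0 < M) (hlam : 0 < lam)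
    (μ : ℝ → ℝ) (hdiff : Differentiable ℝ μ) (hdiff2 : Differentiable ℝ (deriv μ))
    (hpos : ∀ u : ℝ, 0 < deriv μ u)
    (hsc : ∀ u : ℝ, |deriv (deriv μ) u| ≤ M * deriv μ u)
    (𝒳 : Finset (Fin d → ℝ))
    (h𝒳norm : ∀ X ∈ 𝒳, Real.sqrt (∑ i, X i ^ 2) ≤ 1)
    (X : Fin t → (Fin d → ℝ)) (hX : ∀ l, X l ∈ 𝒳)
    (H : (Fin d → ℝ) → Matrix (Fin d) (Fin d) ℝ)
    (hH : ∀ θ, H θ = ∑ l, deriv μ (X l ⬝ᵥ θ) • vecMulVec (X l) (X l)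
        + lam • (1 : Matrix (Fin d) (Fin d) ℝ))
    (f : (Fin d → ℝ) → (Fin d → ℝ))
    (hf : ∀ θ, f θ = ∑ l, μ (X l ⬝ᵥ θ) • X l + lam • θ) :
    ∀ θ θ' : Fin d → ℝ,
      ∀ γ : ℝ, γ = Real.sqrt ((f θ - f θ') ⬝ᵥ (H θ')⁻¹.mulVec (f θ - f θ')) →
        Real.sqrt (∑ i, (θ i - θ' i) ^ 2) ≤ M * γ ^ 2 / lam + γ / Real.sqrt lam := by
  intro θ θ' γ hγ
  rw [show f = glmGrad X lam μ from funext hf, show H = glmHessian X lam μ from funext hH] at hγ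
  have hpos' : ∀ u, 0 ≤ deriv μ u := fun u => (hpos u).le
  have hγ2 := congrArg (· ^ 2) hγ
  rw [Real.sq_sqrt (by simpa only [star_trivial] using
    (glmHessian_posDef hpos' hlam θ').inv.posSemidef.dotProduct_mulVec_nonneg _)] at hγ2
  refine le_mul_sq_div_add_div_sqrt hM.le hlam (hγ ▸ Real.sqrt_nonneg _) ?_
  rw [hγ2]
  exact mul_sq_le_one_add_mul_dotProduct_glmHessian_inv_mulVec hM.le hlam hdiff hdiff2 hpos' hsc
    (fun l => h𝒳norm _ (hX l)) θ θ'

/-- GLM Euclidean-distance bound: with `γ = ‖f_t(θ) − f_t(θ')‖_{H(θ')⁻¹}`,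
one has `‖θ − θ'‖₂ ≤ M·γ²/λ + γ/√λ`. -/
theorem euclidean_dist_le_of_grad_diff
    {d t : ℕ} (M lam : ℝ) (hM : 0 < M) (hlam : 0 < lam)
    (μ : ℝ → ℝ) (hdiff : Differentiable ℝ μ) (hdiff2 : Differentiable ℝ (deriv μ))
    (hpos : ∀ u : ℝ, 0 < deriv μ u)
    (hsc : ∀ u : ℝ, |deriv (deriv μ) u| ≤ M * deriv μ u)
    (𝒳 : Finset (Fin d → ℝ)) (h𝒳ne : 𝒳.Nonempty)
    (h𝒳norm : ∀ X ∈ 𝒳, Real.sqrt (∑ i, X i ^ 2) ≤ 1)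
    (X : Fin t → (Fin d → ℝ)) (hX : ∀ l, X l ∈ 𝒳)
    (H : (Fin d → ℝ) → Matrix (Fin d) (Fin d) ℝ)
    (hH : ∀ θ, H θ = ∑ l, deriv μ (X l ⬝ᵥ θ) • vecMulVec (X l) (X l)
        + lam • (1 : Matrix (Fin d) (Fin d) ℝ))
    (f : (Fin d → ℝ) → (Fin d → ℝ))
    (hf : ∀ θ, f θ = ∑ l, μ (X l ⬝ᵥ θ) • X l + lam • θ) :
    ∀ θ θ' : Fin d → ℝ,
      ∀ γ : ℝ, γ = Real.sqrt ((f θ - f θ') ⬝ᵥ (H θ')⁻¹.mulVec (f θ - f θ')) →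
        Real.sqrt (∑ i, (θ i - θ' i) ^ 2) ≤ M * γ ^ 2 / lam + γ / Real.sqrt lam :=
  euclidean_dist_le_of_grad_diff_general M lam hM hlam μ hdiff hdiff2 hpos hsc 𝒳 h𝒳norm X hX H hH f
    hf
end

section
/- Let b : ℝ → ℝ be three times differentiable with b''(u) > 0 for all u ∈ ℝ and satisfying |b'''(u)| ≤ M·b''(u) for all u ∈ ℝ, where M > 0. Then for every u ∈ ℝ and every s ∈ ℝ with |s| ≤ 1/M, one has b(u + s) − b(u) − s·b'(u) ≤ (e/2)·s²·b''(u). -/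
/-! The bound `|b'''| ≤ M b''` says that `log b''` is `M`-Lipschitz, so `b''` changes by at most a
factor `e` over any interval of length `1 / M`. Taylor's theorem with Lagrange remainder writes
`b (u + s) - b u - s b' u` as `b'' ξ · s² / 2` with `|ξ - u| ≤ |s| ≤ 1 / M`, whence the bound. -/

open Real Set

theorem le_exp_mul_abs_sub_mul_of_abs_deriv_le {g : ℝ → ℝ} {M : ℝ} (hg : Differentiable ℝ g)
    (hpos : ∀ x, 0 < g x) (hbound : ∀ x, |deriv g x| ≤ M * g x) (x y : ℝ) :
    g y ≤ exp (M * |y - x|) * g x := by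
  have hlog : ∀ z ∈ univ, HasDerivWithinAt (fun z => log (g z)) (deriv g z / g z) univ z :=
    fun z _ => ((hg z).hasDerivAt.log (hpos z).ne').hasDerivWithinAt
  have hlog_bound : ∀ z ∈ univ, ‖deriv g z / g z‖ ≤ M := fun z _ => by
    rw [Real.norm_eq_abs, abs_div, abs_of_pos (hpos z), div_le_iff₀ (hpos z)]
    exact hbound z
  have hlip : |log (g y) - log (g x)| ≤ M * |y - x| := by
    simpa only [Real.norm_eq_abs] using
      convex_univ.norm_image_sub_le_of_norm_hasDerivWithin_le hlog hlog_bound trivial trivial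
  calc g y = exp (log (g y) - log (g x)) * g x := by
        rw [exp_sub, exp_log (hpos y), exp_log (hpos x), div_mul_cancel₀ _ (hpos x).ne']
    _ ≤ exp (M * |y - x|) * g x :=
        mul_le_mul_of_nonneg_right (exp_le_exp.mpr ((le_abs_self _).trans hlip)) (hpos x).le

theorem exists_mem_uIcc_sub_sub_mul_deriv_eq {f : ℝ → ℝ} (hf : ContDiff ℝ 2 f) (x₀ x : ℝ) :
    ∃ ξ ∈ uIcc x₀ x, f x - f x₀ - (x - x₀) * deriv f x₀ = deriv (deriv f) ξ / 2 * (x - x₀) ^ 2 := by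
  rcases eq_or_ne x₀ x with rfl | hx
  · exact ⟨x₀, left_mem_uIcc, by simp⟩
  obtain ⟨ξ, hξ, hTaylor⟩ := taylor_mean_remainder_lagrange_iteratedDeriv (n := 1) hx hf.contDiffOn
  refine ⟨ξ, uIoo_subset_uIcc_self hξ, ?_⟩
  have hderiv : derivWithin f (uIcc x₀ x) x₀ = deriv f x₀ :=
    (hf.differentiable two_ne_zero x₀).derivWithin (uniqueDiffOn_uIcc hx x₀ left_mem_uIcc)
  simp only [taylor_within_apply, Finset.sum_range_succ, Finset.sum_range_zero,
    iteratedDerivWithin_zero, iteratedDerivWithin_one, hderiv] at hTaylor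
  rw [iteratedDeriv_succ, iteratedDeriv_one] at hTaylor
  norm_num at hTaylor
  linarith

/-- Sub-exponential Taylor bound for the log-partition function: if `b'' > 0` and
`|b'''| ≤ M·b''` everywhere, then for `|s| ≤ 1/M`,
`b(u + s) − b(u) − s·b'(u) ≤ (e/2)·s²·b''(u)`. -/
theorem log_partition_taylor_bound
    (M : ℝ) (hM : 0 < M) (b : ℝ → ℝ)
    (hdiff : Differentiable ℝ b) (hdiff2 : Differentiable ℝ (deriv b))
    (hdiff3 : Differentiable ℝ (deriv (deriv b)))
    (hpos : ∀ u : ℝ, 0 < deriv (deriv b) u)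
    (hsc : ∀ u : ℝ, |deriv (deriv (deriv b)) u| ≤ M * deriv (deriv b) u) :
    ∀ u s : ℝ, |s| ≤ 1 / M →
      b (u + s) - b u - s * deriv b u ≤ (Real.exp 1 / 2) * s ^ 2 * deriv (deriv b) u := by
  intro u s hs
  have hb : ContDiff ℝ 2 b := contDiff_succ_iff_deriv.mpr
    ⟨hdiff, by simp, contDiff_one_iff_deriv.mpr ⟨hdiff2, hdiff3.continuous⟩⟩
  obtain ⟨ξ, hξ, hTaylor⟩ := exists_mem_uIcc_sub_sub_mul_deriv_eq hb u (u + s)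
  rw [add_sub_cancel_left] at hTaylor
  have hMξ : M * |ξ - u| ≤ 1 :=
    (le_div_iff₀' hM).mp ((abs_sub_left_of_mem_uIcc hξ).trans (by rwa [add_sub_cancel_left]))
  have hgrowth : deriv (deriv b) ξ ≤ exp 1 * deriv (deriv b) u :=
    (le_exp_mul_abs_sub_mul_of_abs_deriv_le hdiff3 hpos hsc u ξ).trans
      (mul_le_mul_of_nonneg_right (exp_le_exp.mpr hMξ) (hpos u).le)
  calc b (u + s) - b u - s * deriv b u = deriv (deriv b) ξ / 2 * s ^ 2 := hTaylor
    _ ≤ exp 1 * deriv (deriv b) u / 2 * s ^ 2 := by gcongr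
    _ = exp 1 / 2 * s ^ 2 * deriv (deriv b) u := by ring
end

section
/- Let G, Q, H be real symmetric d×d matrices with G positive definite, and let 0 < μ_min ≤ μ_max be constants such that μ_min·G ⪯ Q and H ⪯ μ_max·G in the Loewner order (so in particular Q is positive definite and H is positive semidefinite). Then for every v ∈ ℝ^d, ‖Q⁻¹v‖_H ≤ (√μ_max / μ_min)·‖v‖_{G⁻¹}, where ‖v‖_A = √(vᵀAv). -/
/-! Put `w = Q⁻¹ v`. The lower bound on `Q` gives `μ_min ‖w‖_G² ≤ wᵀQw = wᵀv`, and Cauchy–Schwarz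
for the inner product induced by `G`, applied to `w` and `G⁻¹v`, gives `wᵀv ≤ ‖w‖_G ‖v‖_{G⁻¹}`.
Hence `μ_min ‖w‖_G ≤ ‖v‖_{G⁻¹}`, and the upper bound on `H` gives `‖w‖_H ≤ √μ_max ‖w‖_G`. -/

open Matrix

variable {n : Type*} [Fintype n]

theorem Matrix.PosSemidef.dotProduct_mulVec_le_sqrt_mul_sqrt {M : Matrix n n ℝ}
    (hM : M.PosSemidef) (x y : n → ℝ) :
    x ⬝ᵥ M *ᵥ y ≤ √(x ⬝ᵥ M *ᵥ x) * √(y ⬝ᵥ M *ᵥ y) := by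
  let := M.toSeminormedAddCommGroup hM
  let := M.toInnerProductSpace hM
  have h := real_inner_le_norm x y
  simp only [norm_eq_sqrt_re_inner (𝕜 := ℝ), RCLike.re_to_real] at h
  convert h using 1
  · exact (dotProduct_comm _ _).trans rfl
  · congr 2 <;> exact (dotProduct_comm _ _).trans rfl

variable [DecidableEq n]

theorem Matrix.PosDef.dotProduct_le_sqrt_mul_sqrt_inv_s8 {G : Matrix n n ℝ} (hG : G.PosDef)
    (w v : n → ℝ) : w ⬝ᵥ v ≤ √(w ⬝ᵥ G *ᵥ w) * √(v ⬝ᵥ G⁻¹ *ᵥ v) := by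
  have hGu : G *ᵥ G⁻¹ *ᵥ v = v := by
    rw [mulVec_mulVec, mul_nonsing_inv G (isUnit_iff_ne_zero.mpr hG.det_pos.ne'), one_mulVec]
  calc w ⬝ᵥ v = w ⬝ᵥ G *ᵥ G⁻¹ *ᵥ v := by rw [hGu]
    _ ≤ √(w ⬝ᵥ G *ᵥ w) * √(G⁻¹ *ᵥ v ⬝ᵥ G *ᵥ G⁻¹ *ᵥ v) :=
      hG.posSemidef.dotProduct_mulVec_le_sqrt_mul_sqrt w (G⁻¹ *ᵥ v)
    _ = √(w ⬝ᵥ G *ᵥ w) * √(v ⬝ᵥ G⁻¹ *ᵥ v) := by rw [hGu, dotProduct_comm (G⁻¹ *ᵥ v)]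

theorem Matrix.isUnit_det_of_forall_le_dotProduct_mulVec {G Q : Matrix n n ℝ} (hG : G.PosDef)
    {μ : ℝ} (hμ : 0 < μ) (hQ : ∀ x, μ * (x ⬝ᵥ G *ᵥ x) ≤ x ⬝ᵥ Q *ᵥ x) : IsUnit Q.det := by
  refine isUnit_iff_ne_zero.mpr fun hdet => ?_
  obtain ⟨x, hx, hQx⟩ := exists_mulVec_eq_zero_iff.mpr hdet
  have := hQ x
  rw [hQx, dotProduct_zero] at this
  exact (mul_pos hμ (hG.dotProduct_mulVec_pos hx)).not_ge this

theorem Matrix.mul_sqrt_dotProduct_mulVec_inv_le {G Q : Matrix n n ℝ} (hG : G.PosDef)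
    {μ : ℝ} (hμ : 0 < μ) (hQ : ∀ x, μ * (x ⬝ᵥ G *ᵥ x) ≤ x ⬝ᵥ Q *ᵥ x) (v : n → ℝ) :
    μ * √(Q⁻¹ *ᵥ v ⬝ᵥ G *ᵥ Q⁻¹ *ᵥ v) ≤ √(v ⬝ᵥ G⁻¹ *ᵥ v) := by
  set w := Q⁻¹ *ᵥ v
  have hQw : Q *ᵥ w = v := by
    rw [mulVec_mulVec, mul_nonsing_inv Q (isUnit_det_of_forall_le_dotProduct_mulVec hG hμ hQ),
      one_mulVec]
  have hw0 : 0 ≤ w ⬝ᵥ G *ᵥ w := by simpa using hG.posSemidef.dotProduct_mulVec_nonneg w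
  have hw : μ * √(w ⬝ᵥ G *ᵥ w) * √(w ⬝ᵥ G *ᵥ w) ≤ √(w ⬝ᵥ G *ᵥ w) * √(v ⬝ᵥ G⁻¹ *ᵥ v) := by
    calc μ * √(w ⬝ᵥ G *ᵥ w) * √(w ⬝ᵥ G *ᵥ w) = μ * (w ⬝ᵥ G *ᵥ w) := by
          rw [mul_assoc, Real.mul_self_sqrt hw0]
      _ ≤ w ⬝ᵥ v := hQw ▸ hQ w
      _ ≤ √(w ⬝ᵥ G *ᵥ w) * √(v ⬝ᵥ G⁻¹ *ᵥ v) := hG.dotProduct_le_sqrt_mul_sqrt_inv_s8 w v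
  rcases (Real.sqrt_nonneg (w ⬝ᵥ G *ᵥ w)).eq_or_lt with h | h
  · rw [← h, mul_zero]
    exact Real.sqrt_nonneg _
  · rw [mul_comm (√_) (√_)] at hw
    exact le_of_mul_le_mul_right hw h

theorem norm_inv_apply_le_general
    {d : ℕ} (G Q H : Matrix (Fin d) (Fin d) ℝ)
    (hGpd : G.PosDef)
    (μmin μmax : ℝ) (hμmin : 0 < μmin)
    (hQlow : ∀ x : Fin d → ℝ, μmin * (x ⬝ᵥ G.mulVec x) ≤ x ⬝ᵥ Q.mulVec x)
    (hHup : ∀ x : Fin d → ℝ, x ⬝ᵥ H.mulVec x ≤ μmax * (x ⬝ᵥ G.mulVec x)) :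
    ∀ v : Fin d → ℝ,
      Real.sqrt (Q⁻¹.mulVec v ⬝ᵥ H.mulVec (Q⁻¹.mulVec v))
        ≤ (Real.sqrt μmax / μmin) * Real.sqrt (v ⬝ᵥ G⁻¹.mulVec v) := by
  intro v
  set w := Q⁻¹ *ᵥ v
  have hw : √(w ⬝ᵥ G *ᵥ w) ≤ √(v ⬝ᵥ G⁻¹ *ᵥ v) / μmin := by
    rw [le_div_iff₀' hμmin]
    exact mul_sqrt_dotProduct_mulVec_inv_le hGpd hμmin hQlow v
  calc √(w ⬝ᵥ H *ᵥ w) ≤ √(μmax * (w ⬝ᵥ G *ᵥ w)) := Real.sqrt_le_sqrt (hHup w)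
    _ = √μmax * √(w ⬝ᵥ G *ᵥ w) :=
      Real.sqrt_mul' _ (by simpa using hGpd.posSemidef.dotProduct_mulVec_nonneg w)
    _ ≤ √μmax * (√(v ⬝ᵥ G⁻¹ *ᵥ v) / μmin) := by gcongr
    _ = √μmax / μmin * √(v ⬝ᵥ G⁻¹ *ᵥ v) := by ring

/-- Norm comparison under Loewner sandwiching: if `μ_min·G ⪯ Q` and `H ⪯ μ_max·G` with `G`
positive definite, then `‖Q⁻¹v‖_H ≤ (√μ_max / μ_min)·‖v‖_{G⁻¹}`. -/
theorem norm_inv_apply_le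
    {d : ℕ} (G Q H : Matrix (Fin d) (Fin d) ℝ)
    (hGsymm : G.IsSymm) (hQsymm : Q.IsSymm) (hHsymm : H.IsSymm)
    (hGpd : G.PosDef)
    (μmin μmax : ℝ) (hμmin : 0 < μmin) (hμ : μmin ≤ μmax)
    (hQlow : ∀ x : Fin d → ℝ, μmin * (x ⬝ᵥ G.mulVec x) ≤ x ⬝ᵥ Q.mulVec x)
    (hHup : ∀ x : Fin d → ℝ, x ⬝ᵥ H.mulVec x ≤ μmax * (x ⬝ᵥ G.mulVec x))
    (hHpsd : ∀ x : Fin d → ℝ, 0 ≤ x ⬝ᵥ H.mulVec x) :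
    ∀ v : Fin d → ℝ,
      Real.sqrt (Q⁻¹.mulVec v ⬝ᵥ H.mulVec (Q⁻¹.mulVec v))
        ≤ (Real.sqrt μmax / μmin) * Real.sqrt (v ⬝ᵥ G⁻¹.mulVec v) :=
  norm_inv_apply_le_general G Q H hGpd μmin μmax hμmin hQlow hHup
end

section
/- Let (X_t)_{t≥1} be a sequence of vectors in ℝ^d with ‖X_t‖₂ ≤ 1 for all t, let λ > 0, and define G_t = λ·I_d + Σ_{i=1}^t X_i X_iᵀ. Suppose there is an integer n ≥ 0 such that the minimum eigenvalue of G_n satisfies λ_min(G_n) ≥ 1. Then for all T > n, Σ_{t=n+1}^T ‖X_t‖_{G_{t−1}⁻¹} ≤ √(2·(T − n)·d·log(1 + T/(d·λ))). -/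
/-!
Write `x_t = ‖X_t‖²_{G_{t-1}⁻¹}`. By the matrix determinant lemma
`det G_t = det G_{t-1} (1 + x_t)`, so `∏_{t ≤ T} (1 + x_t) = det G_T / λ^d`, and AM-GM on the
eigenvalues of `G_T` bounds `det G_T` by `(tr G_T / d)^d ≤ (λ + T/d)^d`. Hence
`∑_{n < t ≤ T} log (1 + x_t) ≤ d log (1 + T/(dλ))`. For `t > n` we have `G_{t-1} ⪰ G_n ⪰ I`, so
`x_t ≤ ‖X_t‖² ≤ 1` and therefore `x_t ≤ 2 log (1 + x_t)`; Cauchy-Schwarz turns the resulting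
bound on `∑ x_t` into one on `∑ √x_t`.
-/

open Matrix Finset

namespace Real

variable {ι : Type*}

theorem prod_le_sum_div_card_pow {s : Finset ι} {f : ι → ℝ} (hf : ∀ i ∈ s, 0 ≤ f i) :
    ∏ i ∈ s, f i ≤ ((∑ i ∈ s, f i) / #s) ^ #s := by
  rcases s.eq_empty_or_nonempty with rfl | hs
  · simp
  have hcard : (#s : ℝ) ≠ 0 := by exact_mod_cast hs.card_pos.ne'
  have amgm : ∏ i ∈ s, f i ^ ((#s : ℝ)⁻¹) ≤ (∑ i ∈ s, f i) / #s := by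
    simpa [← mul_sum, div_eq_inv_mul, hcard] using
      geom_mean_le_arith_mean_weighted s (fun _ => (#s : ℝ)⁻¹) f (fun _ _ => by positivity)
        (by simp [hcard]) hf
  calc ∏ i ∈ s, f i = (∏ i ∈ s, f i ^ ((#s : ℝ)⁻¹)) ^ #s := by
        rw [← prod_pow]
        exact prod_congr rfl fun i hi => (rpow_inv_natCast_pow (hf i hi) hs.card_pos.ne').symm
    _ ≤ _ := pow_le_pow_left₀ (prod_nonneg fun i hi => rpow_nonneg (hf i hi) _) amgm _

theorem sum_sqrt_le_sqrt_card_mul_sum {s : Finset ι} {f : ι → ℝ} (hf : ∀ i ∈ s, 0 ≤ f i) :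
    ∑ i ∈ s, √(f i) ≤ √(#s * ∑ i ∈ s, f i) := by
  refine le_sqrt_of_sq_le ((sq_sum_le_card_mul_sum_sq ..).trans_eq ?_)
  rw [sum_congr rfl fun i hi => sq_sqrt (hf i hi)]

theorem le_two_mul_log_one_add {x : ℝ} (hx₀ : 0 ≤ x) (hx₁ : x ≤ 1) : x ≤ 2 * log (1 + x) := by
  -- `log (1 + x) ≥ x / (1 + x) ≥ x / 2`
  have hpos : 0 < 1 + x := by linarith
  have := one_sub_inv_le_log_of_pos hpos
  have : (1 + x) * (1 + x)⁻¹ = 1 := mul_inv_cancel₀ hpos.ne'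
  nlinarith

end Real

namespace Matrix

variable {n : Type*} [Fintype n]

theorem dotProduct_vecMulVec_self_mulVec {R : Type*} [CommSemiring R] (u x : n → R) :
    x ⬝ᵥ vecMulVec u u *ᵥ x = (u ⬝ᵥ x) ^ 2 := by
  rw [vecMulVec_mulVec, op_smul_eq_smul, dotProduct_smul, smul_eq_mul, dotProduct_comm, sq]

variable [DecidableEq n]

theorem det_add_vecMulVec {R : Type*} [CommRing R] {A : Matrix n n R} (hA : IsUnit A.det)
    (u v : n → R) : (A + vecMulVec u v).det = A.det * (1 + v ⬝ᵥ A⁻¹ *ᵥ u) := by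
  rw [vecMulVec_eq Unit, det_add_replicateCol_mul_replicateRow hA,
    det_unique (1 + _ : Matrix Unit Unit R)]
  simp only [PUnit.default_eq_unit, add_apply, one_apply_eq, mul_apply, replicateRow_apply,
    replicateCol_apply, sum_mul, mul_assoc, dotProduct, mulVec, mul_sum]
  rw [sum_comm]

theorem PosSemidef.det_le_trace_div_card_pow {A : Matrix n n ℝ} (hA : A.PosSemidef) :
    A.det ≤ (A.trace / Fintype.card n) ^ Fintype.card n := by
  rw [hA.isHermitian.det_eq_prod_eigenvalues, hA.isHermitian.trace_eq_sum_eigenvalues]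
  simpa using Real.prod_le_sum_div_card_pow (s := univ) fun i _ => hA.eigenvalues_nonneg i

theorem PosDef.dotProduct_inv_mulVec_le {A : Matrix n n ℝ} (hA : A.PosDef)
    (hge : ∀ x : n → ℝ, ∑ i, x i ^ 2 ≤ x ⬝ᵥ A *ᵥ x) (u : n → ℝ) :
    u ⬝ᵥ A⁻¹ *ᵥ u ≤ ∑ i, u i ^ 2 := by
  set y := A⁻¹ *ᵥ u
  have hAy : A *ᵥ y = u := by
    rw [mulVec_mulVec, mul_nonsing_inv _ hA.det_pos.ne'.isUnit, one_mulVec]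
  have hq : 0 ≤ u ⬝ᵥ y := by simpa using hA.inv.posSemidef.dotProduct_mulVec_nonneg u
  have hy : ∑ i, y i ^ 2 ≤ u ⬝ᵥ y := by simpa [hAy, dotProduct_comm] using hge y
  have hcs : (u ⬝ᵥ y) ^ 2 ≤ (∑ i, u i ^ 2) * (u ⬝ᵥ y) :=
    calc (u ⬝ᵥ y) ^ 2 ≤ (∑ i, u i ^ 2) * ∑ i, y i ^ 2 := sum_mul_sq_le_sq_mul_sq _ _ _
      _ ≤ _ := mul_le_mul_of_nonneg_left hy (sum_nonneg fun i _ => sq_nonneg _)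
  rcases hq.eq_or_lt with h | h
  · exact h ▸ sum_nonneg fun i _ => sq_nonneg _
  · nlinarith

end Matrix

variable {ι : Type*} [DecidableEq ι]

def designMatrix (lam : ℝ) (X : ℕ → ι → ℝ) (t : ℕ) : Matrix ι ι ℝ :=
  lam • 1 + ∑ i ∈ Icc 1 t, vecMulVec (X i) (X i)

variable {lam : ℝ} {X : ℕ → ι → ℝ}

theorem designMatrix_succ (t : ℕ) :
    designMatrix lam X (t + 1) = designMatrix lam X t + vecMulVec (X (t + 1)) (X (t + 1)) := by
  rw [designMatrix, designMatrix, sum_Icc_succ_top (by omega), add_assoc]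

variable [Fintype ι]

-- `‖X_t‖²_{G_{t-1}⁻¹}`, meaningful for `t ≥ 1` only (`0 - 1 = 0` in `ℕ`)
variable (lam X) in
noncomputable def designPotential (t : ℕ) : ℝ :=
  X t ⬝ᵥ (designMatrix lam X (t - 1))⁻¹ *ᵥ X t

theorem designMatrix_posDef (hlam : 0 < lam) (t : ℕ) : (designMatrix lam X t).PosDef :=
  (PosDef.one.smul hlam).add_posSemidef <|
    posSemidef_sum _ fun i _ => by simpa using posSemidef_vecMulVec_self_star (X i)

theorem monotone_dotProduct_designMatrix_mulVec (x : ι → ℝ) :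
    Monotone fun t => x ⬝ᵥ designMatrix lam X t *ᵥ x :=
  monotone_nat_of_le_succ fun t => by
    simp only [designMatrix_succ, add_mulVec, dotProduct_add, dotProduct_vecMulVec_self_mulVec]
    exact le_add_of_nonneg_right (sq_nonneg _)

theorem det_designMatrix_succ (hlam : 0 < lam) (t : ℕ) :
    (designMatrix lam X (t + 1)).det =
      (designMatrix lam X t).det * (1 + designPotential lam X (t + 1)) := by
  rw [designMatrix_succ, det_add_vecMulVec (designMatrix_posDef hlam t).det_pos.ne'.isUnit,
    designPotential, Nat.add_sub_cancel]

theorem det_designMatrix (hlam : 0 < lam) (T : ℕ) :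
    (designMatrix lam X T).det =
      lam ^ Fintype.card ι * ∏ t ∈ Icc 1 T, (1 + designPotential lam X t) := by
  induction T with
  | zero => simp [designMatrix]
  | succ T ih => rw [det_designMatrix_succ hlam, ih, prod_Icc_succ_top (by omega), mul_assoc]

theorem trace_designMatrix_le (hX : ∀ t, 1 ≤ t → ∑ i, X t i ^ 2 ≤ 1) (T : ℕ) :
    (designMatrix lam X T).trace ≤ lam * Fintype.card ι + T := by
  have hsum : ∑ t ∈ Icc 1 T, X t ⬝ᵥ X t ≤ ∑ t ∈ Icc 1 T, (1 : ℝ) :=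
    sum_le_sum fun t ht => by simpa [dotProduct, sq] using hX t (mem_Icc.mp ht).1
  simpa [designMatrix, trace_sum, mul_comm] using hsum

theorem designPotential_nonneg (hlam : 0 < lam) (t : ℕ) : 0 ≤ designPotential lam X t := by
  simpa [designPotential] using
    (designMatrix_posDef hlam (t - 1)).inv.posSemidef.dotProduct_mulVec_nonneg (X t)

theorem designPotential_le_one (hlam : 0 < lam) (hX : ∀ t, 1 ≤ t → ∑ i, X t i ^ 2 ≤ 1) {n : ℕ}
    (hmin : ∀ x : ι → ℝ, ∑ i, x i ^ 2 ≤ x ⬝ᵥ designMatrix lam X n *ᵥ x) {t : ℕ} (ht : n < t) :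
    designPotential lam X t ≤ 1 :=
  ((designMatrix_posDef hlam _).dotProduct_inv_mulVec_le
    (fun x => (hmin x).trans (monotone_dotProduct_designMatrix_mulVec x (by omega : n ≤ t - 1)))
    _).trans (hX t (by omega))

theorem prod_one_add_designPotential_le (hlam : 0 < lam) (hX : ∀ t, 1 ≤ t → ∑ i, X t i ^ 2 ≤ 1)
    (T : ℕ) :
    ∏ t ∈ Icc 1 T, (1 + designPotential lam X t) ≤
      (1 + T / (Fintype.card ι * lam)) ^ Fintype.card ι := by
  rcases isEmpty_or_nonempty ι with _ | _
  · simp [designPotential]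
  have hd : (0 : ℝ) < Fintype.card ι := by exact_mod_cast Fintype.card_pos
  have hdet := (designMatrix_posDef hlam T (X := X)).posSemidef.det_le_trace_div_card_pow
  have htrace : (designMatrix lam X T).trace / Fintype.card ι ≤
      lam * (1 + T / (Fintype.card ι * lam)) := by
    have : lam * (1 + T / (Fintype.card ι * lam)) * Fintype.card ι = lam * Fintype.card ι + T := by
      field_simp
    rw [div_le_iff₀ hd, this]
    exact trace_designMatrix_le hX T
  rw [det_designMatrix hlam] at hdet
  refine le_of_mul_le_mul_left ?_ (pow_pos hlam (Fintype.card ι))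
  calc _ ≤ _ := hdet
    _ ≤ (lam * (1 + T / (Fintype.card ι * lam))) ^ Fintype.card ι :=
      pow_le_pow_left₀ (div_nonneg (designMatrix_posDef hlam T).posSemidef.trace_nonneg hd.le)
        htrace _
    _ = _ := mul_pow ..

theorem sum_log_one_add_designPotential_le (hlam : 0 < lam)
    (hX : ∀ t, 1 ≤ t → ∑ i, X t i ^ 2 ≤ 1) (n T : ℕ) :
    ∑ t ∈ Icc (n + 1) T, Real.log (1 + designPotential lam X t) ≤
      Fintype.card ι * Real.log (1 + T / (Fintype.card ι * lam)) := by
  have hpos (t : ℕ) : 0 < 1 + designPotential lam X t := by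
    linarith [designPotential_nonneg hlam t (X := X)]
  rw [← Real.log_prod fun t _ => (hpos t).ne', ← Real.log_pow]
  refine Real.log_le_log (prod_pos fun t _ => hpos t) ((prod_le_prod_of_subset_of_one_le
    (Icc_subset_Icc_left (by omega)) (fun t _ => (hpos t).le) fun t _ _ => ?_).trans
    (prod_one_add_designPotential_le hlam hX T))
  linarith [designPotential_nonneg hlam t (X := X)]

/-- Elliptical potential summation bound: if `λ_min(G_n) ≥ 1` (i.e. `G_n ⪰ I`), then
`Σ_{t=n+1}^T ‖X_t‖_{G_{t−1}⁻¹} ≤ √(2·(T − n)·d·log(1 + T/(d·λ)))`. -/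
theorem sum_norms_inv_design_le
    {d : ℕ} (X : ℕ → (Fin d → ℝ))
    (hX : ∀ t, 1 ≤ t → Real.sqrt (∑ i, X t i ^ 2) ≤ 1)
    (lam : ℝ) (hlam : 0 < lam)
    (G : ℕ → Matrix (Fin d) (Fin d) ℝ)
    (hG : ∀ t, G t = lam • (1 : Matrix (Fin d) (Fin d) ℝ)
        + ∑ i ∈ Finset.Icc 1 t, vecMulVec (X i) (X i))
    (n : ℕ)
    (hmin : ∀ x : Fin d → ℝ, ∑ i, x i ^ 2 ≤ x ⬝ᵥ (G n).mulVec x) :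
    ∀ T : ℕ, n < T →
      ∑ t ∈ Finset.Icc (n + 1) T, Real.sqrt (X t ⬝ᵥ ((G (t - 1))⁻¹).mulVec (X t))
        ≤ Real.sqrt (2 * (T - n : ℝ) * d * Real.log (1 + T / (d * lam))) := by
  intro T hnT
  obtain rfl : G = designMatrix lam X := funext hG
  have hX' (t : ℕ) (ht : 1 ≤ t) : ∑ i, X t i ^ 2 ≤ 1 := Real.sqrt_le_one.mp (hX t ht)
  have hsum : ∑ t ∈ Icc (n + 1) T, designPotential lam X t ≤
      2 * (d * Real.log (1 + T / (d * lam))) :=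
    calc _ ≤ ∑ t ∈ Icc (n + 1) T, 2 * Real.log (1 + designPotential lam X t) :=
          sum_le_sum fun t ht => Real.le_two_mul_log_one_add (designPotential_nonneg hlam t)
            (designPotential_le_one hlam hX' hmin (mem_Icc.mp ht).1)
      _ ≤ _ := by
          rw [← mul_sum]
          simpa using sum_log_one_add_designPotential_le hlam hX' n T
  have hcard : (#(Icc (n + 1) T) : ℝ) = T - n := by
    rw [Nat.card_Icc, Nat.add_sub_add_right, Nat.cast_sub hnT.le]
  calc _ ≤ √(#(Icc (n + 1) T) * ∑ t ∈ Icc (n + 1) T, designPotential lam X t) :=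
        Real.sum_sqrt_le_sqrt_card_mul_sum fun t _ => designPotential_nonneg hlam t
    _ ≤ _ := by
        refine Real.sqrt_le_sqrt ?_
        rw [hcard]
        exact (mul_le_mul_of_nonneg_left hsum (sub_nonneg.mpr (Nat.cast_le.mpr hnT.le))).trans_eq
          (by ring)
end

section
/- Let c > 0, 0 < γ < 1, δ ≥ 0, and let f : ℕ → ℝ be a nondecreasing function with f(t)/(t^γ·(log t)^δ) → 0 as t → ∞. Let T₀ ∈ ℕ with T₀ ≥ 1 and b > 1, with T₀·(b − 1) > 1 if δ > 0, and set T_i = ⌊T₀·b^i⌋ for i ≥ 0, T_{−1} = 0, and τ_i = T_i − T_{i−1}. Suppose r : ℕ → ℝ satisfies r(t) ≤ c·t^γ·(log t)^δ + f(t) for all t ≥ 1. Define the doubling-trick regret R^{DT}(T) = Σ_{i=0}^{I(T)} r(τ_i), where I(T) is the least index i with T_i ≥ T. Then there exists a nondecreasing function g : ℕ → ℝ with g(t)/(t^γ·(log t)^δ) → 0 as t → ∞ such that for all T ≥ 2, R^{DT}(T) ≤ l(γ, δ, T₀, b)·c·T^γ·(log T)^δ + g(T), where l(γ, δ, T₀,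 b) = (log(T₀·(b − 1) + 1)/log(T₀·(b − 1)))^δ · b^γ·(b − 1)^γ/(b^γ − 1). -/
/-!
Segment `i ≥ 1` has length `τ_i ≈ T₀(b-1)b^(i-1)`, so the `τ_i^γ` grow geometrically with ratio
`b^γ` and their sum over the segments started before `T` is dominated by the last one: it is at
most `b^γ(b-1)^γ/(b^γ-1)·T^γ + O(log T)`. Every such segment has length at most `(b-1)T + 1`,
and `log (x+1) / log x` decreases on `(1, ∞)`, so `log τ_i ≤ ρ · log ((b-1)T)` with
`ρ = log (T₀(b-1)+1) / log (T₀(b-1))`; this is where `T₀(b-1) > 1` is needed when `δ > 0`.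
Since `τ_i → ∞`, all but finitely many segments satisfy `r(τ_i) ≤ (c+ε)·τ_i^γ (log τ_i)^δ`,
and the others contribute a constant. Hence `R^{DT}(T) - l·c·T^γ (log T)^δ ≤ ε·T^γ (log T)^δ`
eventually, for every `ε > 0`, and the running maximum of the positive part of the left-hand side
is the required `g`.
-/

open Real Filter Finset Asymptotics Topology

lemma antitoneOn_log_add_one_div_log :
    AntitoneOn (fun x : ℝ => log (x + 1) / log x) (Set.Ioi 1) := by
  have hsplit : ∀ y : ℝ, 1 < y → log (y + 1) / log y = 1 + log (1 + y⁻¹) / log y := by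
    intro y hy
    have hy0 : y ≠ 0 := by positivity
    rw [show y + 1 = y * (1 + y⁻¹) by field_simp, log_mul hy0 (by positivity), add_div,
      div_self (log_pos hy).ne']
  intro a (ha : 1 < a) x (hx : 1 < x) hax
  simp only [hsplit a ha, hsplit x hx]
  gcongr 1 + ?_
  exact div_le_div₀ (log_nonneg (le_add_of_nonneg_right (by positivity))) (by gcongr) (log_pos ha)
    (by gcongr)

lemma log_natCast_le_log {s : ℕ} {x : ℝ} (hx : 1 ≤ x) (hs : (s : ℝ) ≤ x) : log s ≤ log x := by
  rcases s.eq_zero_or_pos with rfl | hs0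
  · simpa using log_nonneg hx
  · exact log_le_log (by exact_mod_cast hs0) hs

lemma log_natCast_rpow_le {a x y δ : ℝ} {s : ℕ} (hδ : 0 ≤ δ) (ha : 0 < δ → 1 < a)
    (hax : a ≤ x) (hxy : x ≤ y) (hs : (s : ℝ) ≤ x + 1) :
    log s ^ δ ≤ (log (a + 1) / log a) ^ δ * log y ^ δ := by
  rcases hδ.eq_or_lt with rfl | hδ
  · simp
  have ha := ha hδ
  have hρ : 0 ≤ log (a + 1) / log a := div_nonneg (log_nonneg (by linarith)) (log_nonneg ha.le)
  have hx : 1 < x := ha.trans_le hax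
  rw [← mul_rpow hρ (log_nonneg (by linarith))]
  gcongr
  calc log s ≤ log (x + 1) := log_natCast_le_log (by linarith) hs
    _ = log (x + 1) / log x * log x := (div_mul_cancel₀ _ (log_pos hx).ne').symm
    _ ≤ log (a + 1) / log a * log y :=
      mul_le_mul (antitoneOn_log_add_one_div_log ha hx hax) (log_le_log (by linarith) hxy)
        (log_nonneg hx.le) hρ

lemma sum_range_mul_pow_add_one_rpow_le {x b γ : ℝ} (hx : 0 ≤ x) (hb : 1 < b) (hγ0 : 0 < γ)
    (hγ1 : γ ≤ 1) (n : ℕ) :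
    ∑ k ∈ range n, (x * b ^ k + 1) ^ γ ≤ x ^ γ * (b ^ γ) ^ n / (b ^ γ - 1) + n := by
  have hq : 1 < b ^ γ := one_lt_rpow hb hγ0
  have hterm : ∀ k, (x * b ^ k + 1) ^ γ ≤ x ^ γ * (b ^ γ) ^ k + 1 := fun k => by
    have hbk : 0 ≤ b ^ k := by positivity
    calc (x * b ^ k + 1) ^ γ ≤ (x * b ^ k) ^ γ + 1 ^ γ :=
          rpow_add_le_add_rpow (by positivity) zero_le_one hγ0.le hγ1
      _ = x ^ γ * (b ^ γ) ^ k + 1 := by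
          rw [mul_rpow hx hbk, rpow_pow_comm (by linarith), one_rpow]
  calc ∑ k ∈ range n, (x * b ^ k + 1) ^ γ ≤ ∑ k ∈ range n, (x ^ γ * (b ^ γ) ^ k + 1) :=
        sum_le_sum fun k _ => hterm k
    _ = x ^ γ * (((b ^ γ) ^ n - 1) / (b ^ γ - 1)) + n := by
        rw [sum_add_distrib, ← mul_sum, geom_sum_eq hq.ne']; simp
    _ ≤ x ^ γ * (b ^ γ) ^ n / (b ^ γ - 1) + n := by
        rw [mul_div_assoc]
        gcongr
        linarith

lemma natCast_floor_sub_floor_le {x y : ℝ} (hx : 0 ≤ x) (hxy : x ≤ y) :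
    ((⌊y⌋₊ - ⌊x⌋₊ : ℕ) : ℝ) ≤ y - x + 1 := by
  rw [Nat.cast_sub (Nat.floor_mono hxy)]
  linarith [Nat.floor_le (hx.trans hxy), Nat.lt_floor_add_one x]

lemma sub_sub_one_le_natCast_floor_sub_floor {x y : ℝ} (hx : 0 ≤ x) (hxy : x ≤ y) :
    y - x - 1 ≤ ((⌊y⌋₊ - ⌊x⌋₊ : ℕ) : ℝ) := by
  rw [Nat.cast_sub (Nat.floor_mono hxy)]
  linarith [Nat.floor_le hx, Nat.lt_floor_add_one y]

lemma exists_sum_range_le_add_sum_range {u v : ℕ → ℝ} (hv : 0 ≤ v)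
    (huv : ∀ᶠ k in atTop, u k ≤ v k) :
    ∃ C, ∀ n, ∑ k ∈ range n, u k ≤ C + ∑ k ∈ range n, v k := by
  obtain ⟨K, hK⟩ := eventually_atTop.1 huv
  refine ⟨∑ k ∈ range K, |u k|, fun n => ?_⟩
  have hv_sum : ∀ s : Finset ℕ, 0 ≤ ∑ k ∈ s, v k := fun s => sum_nonneg fun k _ => hv k
  rcases le_total n K with hnK | hKn
  · calc ∑ k ∈ range n, u k ≤ ∑ k ∈ range n, |u k| := sum_le_sum fun k _ => le_abs_self _
      _ ≤ ∑ k ∈ range K, |u k| :=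
          sum_le_sum_of_subset_of_nonneg (range_subset_range.2 hnK) fun k _ _ => abs_nonneg _
      _ ≤ _ := le_add_of_nonneg_right (hv_sum _)
  · rw [← sum_range_add_sum_Ico u hKn, ← sum_range_add_sum_Ico v hKn]
    calc ∑ k ∈ range K, u k + ∑ k ∈ Ico K n, u k
        ≤ ∑ k ∈ range K, |u k| + ∑ k ∈ Ico K n, v k := by
          gcongr with k _ k hk
          exacts [le_abs_self _, hK k (mem_Ico.1 hk).1]
      _ ≤ _ := by linarith [hv_sum (range K)]

lemma eventually_sub_mul_le_of_forall_le_add {α : Type*} {l : Filter α} {u B w : α → ℝ}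
    {c P : ℝ} (hw : Tendsto w l atTop) (hB : Tendsto (fun t => B t / w t) l (𝓝 P))
    (hu : ∀ ε > 0, ∃ C, ∀ᶠ t in l, u t ≤ C + (c + ε) * B t) :
    ∀ ε > 0, ∀ᶠ t in l, u t - c * P * w t ≤ ε * w t := by
  intro ε hε
  set ε' := ε / (|P| + 1)
  have hε' : 0 < ε' := by positivity
  have hlt : (c + ε') * P < c * P + ε := by
    have : ε' * |P| < ε := by
      rw [div_mul_eq_mul_div, div_lt_iff₀ (by positivity)]
      nlinarith [abs_nonneg P]
    nlinarith [le_abs_self P]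
  obtain ⟨C, hC⟩ := hu ε' hε'
  have hlim : Tendsto (fun t => C / w t + (c + ε') * (B t / w t)) l (𝓝 (0 + (c + ε') * P)) :=
    (tendsto_const_nhds.div_atTop hw).add (hB.const_mul _)
  rw [zero_add] at hlim
  filter_upwards [hC, hlim.eventually (gt_mem_nhds hlt), hw.eventually_gt_atTop 0]
    with t hut hlt' hwt
  have : C + (c + ε') * B t < (c * P + ε) * w t := by
    rwa [← div_lt_iff₀ hwt, add_div, mul_div_assoc]
  linarith

lemma exists_monotone_isLittleO_ge {E w : ℕ → ℝ} (hw0 : 0 ≤ w) (hw : Monotone w)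
    (hw_top : Tendsto w atTop atTop) (hE : ∀ ε > 0, ∀ᶠ t in atTop, E t ≤ ε * w t) :
    ∃ g : ℕ → ℝ, Monotone g ∧ g =o[atTop] w ∧ E ≤ g := by
  set g := partialSups (E ⊔ 0)
  have hg0 : 0 ≤ ⇑g := fun t =>
    (le_sup_right : (0 : ℝ) ≤ E t ⊔ 0).trans (le_partialSups (E ⊔ 0) t)
  refine ⟨g, g.monotone, isLittleO_iff.2 fun ε hε => ?_,
    fun t => (le_sup_left : E t ≤ E t ⊔ 0).trans (le_partialSups (E ⊔ 0) t)⟩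
  obtain ⟨N, hN⟩ := eventually_atTop.1 (hE ε hε)
  filter_upwards [eventually_ge_atTop N, hw_top.eventually_ge_atTop (g N / ε)] with t htN hgN
  rw [norm_of_nonneg (hg0 t), norm_of_nonneg (hw0 t)]
  refine partialSups_le _ _ _ fun s hst => ?_
  have hεw : 0 ≤ ε * w t := mul_nonneg hε.le (hw0 t)
  rcases le_total s N with hsN | hNs
  · exact (le_partialSups_of_le _ hsN).trans ((div_le_iff₀' hε).1 hgN)
  · exact sup_le ((hN s hNs).trans (by gcongr; exact hw hst)) hεw

noncomputable def regretRate (γ δ t : ℝ) : ℝ := t ^ γ * log t ^ δ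

lemma regretRate_natCast_nonneg (γ δ : ℝ) (t : ℕ) : 0 ≤ regretRate γ δ t :=
  mul_nonneg (by positivity) (rpow_nonneg (log_natCast_nonneg t) δ)

lemma monotone_regretRate_natCast {γ δ : ℝ} (hγ : 0 ≤ γ) (hδ : 0 ≤ δ) :
    Monotone fun t : ℕ => regretRate γ δ t := by
  intro s t hst
  have hst' : (s : ℝ) ≤ t := by exact_mod_cast hst
  have hlog : log s ≤ log t := by
    rcases s.eq_zero_or_pos with rfl | hs
    · simpa using log_natCast_nonneg t
    · exact log_le_log (by exact_mod_cast hs) hst'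
  exact mul_le_mul (rpow_le_rpow (by positivity) hst' hγ)
    (rpow_le_rpow (log_natCast_nonneg s) hlog hδ) (rpow_nonneg (log_natCast_nonneg s) δ)
    (by positivity)

lemma tendsto_regretRate_atTop {γ δ : ℝ} (hγ : 0 < γ) (hδ : 0 ≤ δ) :
    Tendsto (regretRate γ δ) atTop atTop := by
  refine tendsto_atTop_mono' atTop ?_ (tendsto_rpow_atTop hγ)
  filter_upwards [eventually_ge_atTop (exp 1)] with t ht
  have ht0 : 0 < t := (exp_pos 1).trans_le ht
  have hlog : 1 ≤ log t := by rwa [le_log_iff_exp_le ht0]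
  exact le_mul_of_one_le_right (rpow_nonneg ht0.le γ) (one_le_rpow hlog hδ)

lemma tendsto_log_mul_rpow_mul_div_regretRate {β γ : ℝ} (hβ : 0 < β) (hγ : 0 < γ)
    (δ l L M : ℝ) :
    Tendsto (fun T : ℝ => log (β * T) ^ δ * (l * T ^ γ + (log T / L + M)) / regretRate γ δ T)
      atTop (𝓝 l) := by
  have hratio : Tendsto (fun T : ℝ => (log (β * T) / log T) ^ δ) atTop (𝓝 1) := by
    have h : Tendsto (fun T : ℝ => log β / log T + 1) atTop (𝓝 1) := by
      simpa using (tendsto_const_nhds.div_atTop tendsto_log_atTop).add_const 1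
    have h' : Tendsto (fun T : ℝ => log (β * T) / log T) atTop (𝓝 1) := h.congr' <| by
      filter_upwards [eventually_gt_atTop 1] with T hT
      rw [log_mul hβ.ne' (by positivity), add_div, div_self (log_pos hT).ne', add_comm]
    simpa using h'.rpow_const (Or.inl one_ne_zero)
  have hsmall : Tendsto (fun T : ℝ => (log T / L + M) / T ^ γ) atTop (𝓝 0) := by
    have h := ((isLittleO_log_rpow_atTop hγ).tendsto_div_nhds_zero.div_const L).add
      (tendsto_const_nhds.div_atTop (tendsto_rpow_atTop hγ) : Tendsto (fun T : ℝ => M / T ^ γ) _ _)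
    simp only [zero_div, add_zero] at h
    refine h.congr' ?_
    filter_upwards [eventually_gt_atTop 0] with T hT
    rw [add_div, div_right_comm]
  have h := hratio.mul (hsmall.const_add l)
  rw [one_mul, add_zero] at h
  refine h.congr' ?_
  filter_upwards [eventually_gt_atTop 1, eventually_gt_atTop β⁻¹] with T hT hβT
  have hβT' : 1 < β * T := by rwa [← inv_lt_iff_one_lt_mul₀' hβ]
  have hT0 : 0 < T := by linarith
  rw [regretRate, div_rpow (log_nonneg hβT'.le) (log_nonneg hT.le)]
  have := (rpow_pos_of_pos (log_pos hT) δ).ne'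
  have := (rpow_pos_of_pos hT0 γ).ne'
  field_simp

/-- The length `τ_{k+1} = T_{k+1} - T_k` of segment `k + 1`, for `T_i = ⌊T₀ b^i⌋`. -/
noncomputable def segmentLength (T₀ : ℕ) (b : ℝ) (k : ℕ) : ℕ :=
  ⌊(T₀ : ℝ) * b ^ (k + 1)⌋₊ - ⌊(T₀ : ℝ) * b ^ k⌋₊

noncomputable def doublingTrickBound (γ δ : ℝ) (T₀ : ℕ) (b T : ℝ) : ℝ :=
  (log (T₀ * (b - 1) + 1) / log (T₀ * (b - 1))) ^ δ * log ((b - 1) * T) ^ δ *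
    (b ^ γ * (b - 1) ^ γ / (b ^ γ - 1) * T ^ γ + (log T / log b + 1))

section segmentLength

variable {T₀ : ℕ} {b : ℝ}

lemma segmentLength_le (hb : 1 ≤ b) (k : ℕ) :
    (segmentLength T₀ b k : ℝ) ≤ T₀ * (b - 1) * b ^ k + 1 := by
  have h := natCast_floor_sub_floor_le (x := (T₀ : ℝ) * b ^ k) (y := T₀ * b ^ (k + 1))
    (by positivity) (by gcongr; exact k.le_succ)
  rw [segmentLength]
  linarith [show (T₀ : ℝ) * b ^ (k + 1) = T₀ * b ^ k + T₀ * (b - 1) * b ^ k by ring]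

lemma tendsto_segmentLength (hT₀ : 1 ≤ T₀) (hb : 1 < b) :
    Tendsto (segmentLength T₀ b) atTop atTop := by
  rw [← tendsto_natCast_atTop_iff (R := ℝ)]
  have hlin : Tendsto (fun k : ℕ => (T₀ : ℝ) * (b - 1) * b ^ k - 1) atTop atTop :=
    tendsto_atTop_add_const_right _ _ ((tendsto_pow_atTop_atTop_of_one_lt hb).const_mul_atTop
      (mul_pos (by exact_mod_cast hT₀) (by linarith)))
  refine tendsto_atTop_mono (fun k => ?_) hlin
  have h := sub_sub_one_le_natCast_floor_sub_floor (x := (T₀ : ℝ) * b ^ k)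
    (y := T₀ * b ^ (k + 1)) (by positivity) (by gcongr; exacts [hb.le, k.le_succ])
  rw [segmentLength]
  linarith [show (T₀ : ℝ) * b ^ (k + 1) = T₀ * b ^ k + T₀ * (b - 1) * b ^ k by ring]

variable {n : ℕ} {T : ℝ}

lemma sum_segmentLength_rpow_le {γ : ℝ} (hγ0 : 0 < γ) (hγ1 : γ ≤ 1) (hb : 1 < b)
    (hT : T₀ * b ^ n ≤ b * T) :
    ∑ k ∈ range n, (segmentLength T₀ b k : ℝ) ^ γ
      ≤ b ^ γ * (b - 1) ^ γ / (b ^ γ - 1) * T ^ γ + n := by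
  have hb0 : 0 ≤ b := by linarith
  have hb1 : 0 ≤ b - 1 := by linarith
  have hq : 0 < b ^ γ - 1 := by linarith [one_lt_rpow hb hγ0]
  have hT0 : 0 ≤ T := by nlinarith [show 0 ≤ (T₀ : ℝ) * b ^ n by positivity]
  have hgeom := sum_range_mul_pow_add_one_rpow_le (x := T₀ * (b - 1)) (by positivity) hb hγ0 hγ1 n
  have hlead : ((T₀ : ℝ) * (b - 1)) ^ γ * (b ^ γ) ^ n ≤ b ^ γ * (b - 1) ^ γ * T ^ γ := by
    rw [rpow_pow_comm hb0, ← mul_rpow (by positivity) (by positivity),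
      ← mul_rpow hb0 hb1, ← mul_rpow (by positivity) hT0]
    exact rpow_le_rpow (by positivity) (by nlinarith) hγ0.le
  calc ∑ k ∈ range n, (segmentLength T₀ b k : ℝ) ^ γ
      ≤ ∑ k ∈ range n, (T₀ * (b - 1) * b ^ k + 1) ^ γ :=
        sum_le_sum fun k _ => rpow_le_rpow (by positivity) (segmentLength_le hb.le k) hγ0.le
    _ ≤ _ := hgeom
    _ ≤ _ := by
        rw [div_mul_eq_mul_div]
        gcongr ?_ / _ + _

lemma log_segmentLength_rpow_le {δ : ℝ} (hδ : 0 ≤ δ) (hb : 1 < b)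
    (hTb : 0 < δ → 1 < (T₀ : ℝ) * (b - 1)) {k : ℕ} (hk : k < n) (hT : T₀ * b ^ n ≤ b * T) :
    log (segmentLength T₀ b k) ^ δ ≤
      (log (T₀ * (b - 1) + 1) / log (T₀ * (b - 1))) ^ δ * log ((b - 1) * T) ^ δ := by
  have hb1 : 0 ≤ b - 1 := by linarith
  have hkT : (T₀ : ℝ) * b ^ k ≤ T := by
    refine le_of_mul_le_mul_left ?_ (by linarith : 0 < b)
    calc b * (T₀ * b ^ k) = T₀ * b ^ (k + 1) := by ring
      _ ≤ T₀ * b ^ n := by gcongr; exacts [hb.le, hk]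
      _ ≤ b * T := hT
  refine log_natCast_rpow_le hδ hTb ?_ ?_ (segmentLength_le hb.le k)
  · exact le_mul_of_one_le_right (by positivity) (one_le_pow₀ hb.le)
  · calc (T₀ : ℝ) * (b - 1) * b ^ k = (b - 1) * (T₀ * b ^ k) := by ring
      _ ≤ (b - 1) * T := by gcongr

lemma natCast_le_log_div_log_add_one (hb : 1 < b) (hT₀ : 1 ≤ T₀) (hT : T₀ * b ^ n ≤ b * T) :
    (n : ℝ) ≤ log T / log b + 1 := by
  have hbn : b ^ n ≤ b * T :=
    (le_mul_of_one_le_left (by positivity) (by exact_mod_cast hT₀)).trans hT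
  have hT0 : 0 < T := by nlinarith [pow_pos (by linarith : 0 < b) n]
  have hlogb := log_pos hb
  have : (n - 1) * log b ≤ log T := by
    have := log_le_log (by positivity) hbn
    rw [log_pow, log_mul (by positivity) hT0.ne'] at this
    linarith
  linarith [(le_div_iff₀ hlogb).2 this]

lemma sum_regretRate_segmentLength_le {γ δ : ℝ} (hγ0 : 0 < γ) (hγ1 : γ ≤ 1) (hδ : 0 ≤ δ)
    (hb : 1 < b) (hT₀ : 1 ≤ T₀) (hTb : 0 < δ → 1 < (T₀ : ℝ) * (b - 1)) (hn : 1 ≤ n)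
    (hT : T₀ * b ^ n ≤ b * T) :
    ∑ k ∈ range n, regretRate γ δ (segmentLength T₀ b k) ≤ doublingTrickBound γ δ T₀ b T := by
  set M := (log (T₀ * (b - 1) + 1) / log (T₀ * (b - 1))) ^ δ * log ((b - 1) * T) ^ δ
  have hlog : ∀ k ∈ range n, log (segmentLength T₀ b k) ^ δ ≤ M := fun k hk =>
    log_segmentLength_rpow_le hδ hb hTb (mem_range.1 hk) hT
  have hM : 0 ≤ M := (rpow_nonneg (log_natCast_nonneg _) δ).trans (hlog 0 (mem_range.2 hn))
  calc ∑ k ∈ range n, regretRate γ δ (segmentLength T₀ b k)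
      ≤ ∑ k ∈ range n, M * (segmentLength T₀ b k : ℝ) ^ γ := sum_le_sum fun k hk => by
        rw [regretRate, mul_comm]
        exact mul_le_mul_of_nonneg_right (hlog k hk) (by positivity)
    _ = M * ∑ k ∈ range n, (segmentLength T₀ b k : ℝ) ^ γ := (mul_sum _ _ _).symm
    _ ≤ M * (b ^ γ * (b - 1) ^ γ / (b ^ γ - 1) * T ^ γ + n) := by
        gcongr
        exact sum_segmentLength_rpow_le hγ0 hγ1 hb hT
    _ ≤ doublingTrickBound γ δ T₀ b T := by
        rw [doublingTrickBound]
        gcongr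
        exact natCast_le_log_div_log_add_one hb hT₀ hT

lemma exists_sum_segmentLength_le_add_mul_doublingTrickBound {r : ℕ → ℝ} {c γ δ : ℝ}
    (hc : 0 ≤ c) (hγ0 : 0 < γ) (hγ1 : γ ≤ 1) (hδ : 0 ≤ δ) (hb : 1 < b) (hT₀ : 1 ≤ T₀)
    (hTb : 0 < δ → 1 < (T₀ : ℝ) * (b - 1)) (hr : ∀ᶠ t in atTop, r t ≤ c * regretRate γ δ t) :
    ∃ C, ∀ (n : ℕ) (T : ℝ), T₀ * b ^ (n + 1) ≤ b * T →
      ∑ k ∈ range (n + 1), r (segmentLength T₀ b k) ≤ C + c * doublingTrickBound γ δ T₀ b T := by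
  obtain ⟨C, hC⟩ := exists_sum_range_le_add_sum_range
    (fun k => mul_nonneg hc (regretRate_natCast_nonneg γ δ (segmentLength T₀ b k)))
    ((tendsto_segmentLength hT₀ hb).eventually hr)
  refine ⟨C, fun n T hT => (hC (n + 1)).trans ?_⟩
  rw [← mul_sum]
  gcongr
  exact sum_regretRate_segmentLength_le hγ0 hγ1 hδ hb hT₀ hTb n.succ_pos hT

end segmentLength

lemma exists_eq_succ_and_mul_pow_le {T₀ m T : ℕ} {b : ℝ} {Ti : ℕ → ℕ} (hb : 0 ≤ b)
    (hTi : ∀ i, Ti i = ⌊(T₀ : ℝ) * b ^ i⌋₊) (hT : T₀ < T) (hTm : T ≤ Ti m)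
    (hlt : ∀ i < m, Ti i < T) : ∃ n, m = n + 1 ∧ (T₀ : ℝ) * b ^ (n + 1) ≤ b * T := by
  obtain ⟨n, rfl⟩ : ∃ n, m = n + 1 := Nat.exists_eq_add_one.2 <| Nat.pos_of_ne_zero fun h => by
    rw [h, hTi, pow_zero, mul_one, Nat.floor_natCast] at hTm
    omega
  have h := hlt n n.lt_succ_self
  rw [hTi, Nat.floor_lt (by positivity)] at h
  refine ⟨n, rfl, ?_⟩
  calc (T₀ : ℝ) * b ^ (n + 1) = b * (T₀ * b ^ n) := by ring
    _ ≤ b * T := by gcongr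

theorem doubling_trick_regret_bound_general
    (c γ δ : ℝ) (hc : 0 < c) (hγ0 : 0 < γ) (hγ1 : γ < 1) (hδ : 0 ≤ δ)
    (f : ℕ → ℝ)
    (hf_small : Tendsto (fun t : ℕ => f t / ((t : ℝ) ^ γ * (Real.log t) ^ δ))
      atTop (nhds 0))
    (T₀ : ℕ) (hT₀ : 1 ≤ T₀) (b : ℝ) (hb : 1 < b)
    (hTb : 0 < δ → 1 < (T₀ : ℝ) * (b - 1))
    (Ti : ℕ → ℕ) (hTi : ∀ i, Ti i = Nat.floor ((T₀ : ℝ) * b ^ i))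
    (τ : ℕ → ℕ) (hτ : ∀ i, 1 ≤ i → τ i = Ti i - Ti (i - 1))
    (r : ℕ → ℝ) (hr : ∀ t : ℕ, 1 ≤ t → r t ≤ c * (t : ℝ) ^ γ * (Real.log t) ^ δ + f t)
    (I : ℕ → ℕ) (hI : ∀ T, T ≤ Ti (I T) ∧ ∀ i < I T, Ti i < T)
    (RDT : ℕ → ℝ) (hRDT : ∀ T, RDT T = ∑ i ∈ Finset.range (I T + 1), r (τ i)) :
    ∃ g : ℕ → ℝ, Monotone g ∧
      Tendsto (fun t : ℕ => g t / ((t : ℝ) ^ γ * (Real.log t) ^ δ)) atTop (nhds 0) ∧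
      ∀ T : ℕ, 2 ≤ T →
        RDT T ≤ (Real.log ((T₀ : ℝ) * (b - 1) + 1) / Real.log ((T₀ : ℝ) * (b - 1))) ^ δ
            * (b ^ γ * (b - 1) ^ γ / (b ^ γ - 1))
            * c * (T : ℝ) ^ γ * (Real.log T) ^ δ + g T := by
  have hw : Tendsto (fun t : ℕ => regretRate γ δ t) atTop atTop :=
    (tendsto_regretRate_atTop hγ0 hδ).comp tendsto_natCast_atTop_atTop
  have hbound : Tendsto (fun T : ℕ => doublingTrickBound γ δ T₀ b T / regretRate γ δ T) atTop
      (𝓝 ((log (T₀ * (b - 1) + 1) / log (T₀ * (b - 1))) ^ δ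
        * (b ^ γ * (b - 1) ^ γ / (b ^ γ - 1)))) :=
    (((tendsto_log_mul_rpow_mul_div_regretRate (sub_pos.2 hb) hγ0 δ
      (b ^ γ * (b - 1) ^ γ / (b ^ γ - 1)) (log b) 1).const_mul _).comp
      tendsto_natCast_atTop_atTop).congr fun T => by
        simp only [Function.comp, doublingTrickBound, mul_assoc, mul_div_assoc]
  have hτ_eq : ∀ k, τ (k + 1) = segmentLength T₀ b k := fun k => by
    rw [hτ (k + 1) k.succ_pos, hTi, hTi, Nat.add_sub_cancel, segmentLength]
  have hr_eventually : ∀ ε > 0, ∀ᶠ t : ℕ in atTop, r t ≤ (c + ε) * regretRate γ δ t :=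
    fun ε hε => by
      filter_upwards [(tendsto_order.1 hf_small).2 ε hε, hw.eventually_gt_atTop 0,
        eventually_ge_atTop 1] with t hft hwt ht
      rw [regretRate] at hwt ⊢
      linarith [hr t ht, (div_lt_iff₀ hwt).1 hft]
  have hupper : ∀ ε > 0, ∃ C, ∀ᶠ T : ℕ in atTop,
      RDT T ≤ C + (c + ε) * doublingTrickBound γ δ T₀ b T := fun ε hε => by
    obtain ⟨C, hC⟩ := exists_sum_segmentLength_le_add_mul_doublingTrickBound (by linarith)
      hγ0 hγ1.le hδ hb hT₀ hTb (hr_eventually ε hε)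
    refine ⟨r (τ 0) + C, ?_⟩
    filter_upwards [eventually_gt_atTop T₀] with T hT
    obtain ⟨n, hn, hTn⟩ := exists_eq_succ_and_mul_pow_le (by linarith) hTi hT (hI T).1 (hI T).2
    rw [hRDT, hn, sum_range_succ']
    simp only [hτ_eq]
    linarith [hC n T hTn]
  obtain ⟨g, hg_mono, hg_o, hg_ge⟩ := exists_monotone_isLittleO_ge
    (fun t => regretRate_natCast_nonneg γ δ t) (monotone_regretRate_natCast hγ0.le hδ) hw
    (eventually_sub_mul_le_of_forall_le_add hw hbound hupper)
  refine ⟨g, hg_mono, hg_o.tendsto_div_nhds_zero, fun T _ => ?_⟩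
  have := hg_ge T
  simp only [regretRate] at this
  linarith

/-- Regret bound of the doubling trick (Besson–Kaufmann, Theorem 4): if the base algorithm
satisfies `r(t) ≤ c·t^γ·(log t)^δ + f(t)` with `f(t) = o(t^γ·(log t)^δ)`, then the anytime
version, restarted at `T_i = ⌊T₀·b^i⌋`, satisfies
`R^{DT}(T) ≤ l(γ, δ, T₀, b)·c·T^γ·(log T)^δ + g(T)` with `g(t) = o(t^γ·(log t)^δ)`. -/
theorem doubling_trick_regret_bound
    (c γ δ : ℝ) (hc : 0 < c) (hγ0 : 0 < γ) (hγ1 : γ < 1) (hδ : 0 ≤ δ)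
    (f : ℕ → ℝ) (hf_mono : Monotone f)
    (hf_small : Tendsto (fun t : ℕ => f t / ((t : ℝ) ^ γ * (Real.log t) ^ δ))
      atTop (nhds 0))
    (T₀ : ℕ) (hT₀ : 1 ≤ T₀) (b : ℝ) (hb : 1 < b)
    (hTb : 0 < δ → 1 < (T₀ : ℝ) * (b - 1))
    (Ti : ℕ → ℕ) (hTi : ∀ i, Ti i = Nat.floor ((T₀ : ℝ) * b ^ i))
    (τ : ℕ → ℕ) (hτ0 : τ 0 = Ti 0) (hτ : ∀ i, 1 ≤ i → τ i = Ti i - Ti (i - 1))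
    (r : ℕ → ℝ) (hr : ∀ t : ℕ, 1 ≤ t → r t ≤ c * (t : ℝ) ^ γ * (Real.log t) ^ δ + f t)
    (I : ℕ → ℕ) (hI : ∀ T, T ≤ Ti (I T) ∧ ∀ i < I T, Ti i < T)
    (RDT : ℕ → ℝ) (hRDT : ∀ T, RDT T = ∑ i ∈ Finset.range (I T + 1), r (τ i)) :
    ∃ g : ℕ → ℝ, Monotone g ∧
      Tendsto (fun t : ℕ => g t / ((t : ℝ) ^ γ * (Real.log t) ^ δ)) atTop (nhds 0) ∧
      ∀ T : ℕ, 2 ≤ T →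
        RDT T ≤ (Real.log ((T₀ : ℝ) * (b - 1) + 1) / Real.log ((T₀ : ℝ) * (b - 1))) ^ δ
            * (b ^ γ * (b - 1) ^ γ / (b ^ γ - 1))
            * c * (T : ℝ) ^ γ * (Real.log T) ^ δ + g T :=
  doubling_trick_regret_bound_general c γ δ hc hγ0 hγ1 hδ f hf_small T₀ hT₀ b hb hTb Ti hTi τ hτ r
    hr I hI RDT hRDT
end

section
/- Let b = (3 + √5)/2, γ = 1/2, δ = 3/2, and define l(γ, δ, T₀, b) = (log(T₀·(b − 1) + 1)/log(T₀·(b − 1)))^δ · b^γ·(b − 1)^γ/(b^γ − 1). Then for every real T₀ ≥ 100, l(γ, δ, T₀, b) ≤ 3.34. -/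
/-!
With `φ` the golden ratio, `b = (3 + √5) / 2 = φ²`, `b - 1 = φ` and `φ - 1 = φ⁻¹`, so the constant
factor of `l` is `φ · √φ / φ⁻¹ = φ² √φ < 3.3302`. For `x = T₀ φ ≥ 160` we have
`log (x + 1) / log x ≤ 1 + 1 / (x log x) ≤ 1 + 1 / 800` since `log x ≥ 5`, and the `3/2`-th power of
this is below `1.0026`.
-/

open Real goldenRatio

lemma log_add_one_sub_log_le_inv {x : ℝ} (hx : 0 < x) : log (x + 1) - log x ≤ x⁻¹ := by
  rw [← log_div (by positivity) hx.ne']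
  calc log ((x + 1) / x) ≤ (x + 1) / x - 1 := log_le_sub_one_of_pos (by positivity)
    _ = x⁻¹ := by field_simp; ring

lemma one_le_log_add_one_div_log {x : ℝ} (hx : 1 < x) : 1 ≤ log (x + 1) / log x := by
  rw [one_le_div (log_pos hx)]
  exact log_le_log (by linarith) (by linarith)

lemma log_add_one_div_log_le {x : ℝ} (hx : 1 < x) :
    log (x + 1) / log x ≤ 1 + (x * log x)⁻¹ := by
  have hlog := log_pos hx
  rw [div_le_iff₀ hlog, add_mul, one_mul, mul_inv, mul_assoc, inv_mul_cancel₀ hlog.ne', mul_one]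
  linarith [log_add_one_sub_log_le_inv (zero_lt_one.trans hx)]

lemma five_le_log {x : ℝ} (hx : 160 ≤ x) : 5 ≤ log x := by
  rw [le_log_iff_exp_le (by linarith), show (5 : ℝ) = (5 : ℕ) * 1 by norm_num, exp_nat_mul]
  calc exp 1 ^ 5 ≤ 2.7182818286 ^ 5 := pow_le_pow_left₀ (exp_pos 1).le exp_one_lt_d9.le 5
    _ ≤ x := by norm_num; linarith

lemma log_add_one_div_log_rpow_le {x : ℝ} (hx : 160 ≤ x) :
    (log (x + 1) / log x) ^ (3 / 2 : ℝ) ≤ 1.0026 := by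
  set r := log (x + 1) / log x
  have hr1 : 1 ≤ r := one_le_log_add_one_div_log (by linarith)
  have hr : r ≤ 1 + (160 * 5)⁻¹ :=
    calc r ≤ 1 + (x * log x)⁻¹ := log_add_one_div_log_le (by linarith)
      _ ≤ 1 + (160 * 5)⁻¹ := by gcongr; exact five_le_log hx
  calc r ^ (3 / 2 : ℝ) ≤ r ^ (2 : ℝ) := rpow_le_rpow_of_exponent_le hr1 (by norm_num)
    _ = r ^ 2 := rpow_two r
    _ ≤ (1 + (160 * 5)⁻¹) ^ 2 := by gcongr
    _ ≤ 1.0026 := by norm_num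

lemma goldenRatio_mem_Ioo : φ ∈ Set.Ioo 1.618 1.618034 := by
  have h₁ : 2.236 < √5 := (lt_sqrt (by norm_num)).2 (by norm_num)
  have h₂ : √5 < 2.236068 := (sqrt_lt' (by norm_num)).2 (by norm_num)
  unfold goldenRatio
  constructor <;> linarith

lemma three_add_sqrt_five_div_two : (3 + √5) / 2 = φ ^ 2 := by
  rw [goldenRatio_sq]; ring

lemma goldenRatio_sub_one : φ - 1 = φ⁻¹ := by
  rw [inv_goldenRatio, ← one_sub_goldenConj]; ring

lemma goldenRatio_sq_sub_one : φ ^ 2 - 1 = φ := by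
  rw [goldenRatio_sq]; ring

lemma goldenRatio_sq_rpow_half : (φ ^ 2) ^ (1 / 2 : ℝ) = φ := by
  rw [← sqrt_eq_rpow, sqrt_sq goldenRatio_pos.le]

lemma doubling_constant_goldenRatio :
    (φ ^ 2) ^ (1 / 2 : ℝ) * (φ ^ 2 - 1) ^ (1 / 2 : ℝ) / ((φ ^ 2) ^ (1 / 2 : ℝ) - 1)
      = φ ^ 2 * √φ := by
  rw [goldenRatio_sq_rpow_half, goldenRatio_sq_sub_one, ← sqrt_eq_rpow, goldenRatio_sub_one]
  field_simp

lemma goldenRatio_sq_mul_sqrt_lt : φ ^ 2 * √φ < 3.3302 := by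
  have hφ := goldenRatio_mem_Ioo.2
  have hsqrt : √φ < 1.27202 := (sqrt_lt' (by norm_num)).2 (by linarith)
  calc φ ^ 2 * √φ < 1.618034 ^ 2 * 1.27202 := by gcongr
    _ < 3.3302 := by norm_num

/-- The doubling-trick loss constant with `b = (3 + √5)/2`, `γ = 1/2`, `δ = 3/2` is at most
`3.34` for every `T₀ ≥ 100`. -/
theorem doubling_trick_constant_le
    (b γ δ : ℝ) (hb : b = (3 + Real.sqrt 5) / 2) (hγ : γ = 1 / 2) (hδ : δ = 3 / 2)
    (l : ℝ → ℝ)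
    (hl : ∀ T₀ : ℝ, l T₀ = (Real.log (T₀ * (b - 1) + 1) / Real.log (T₀ * (b - 1))) ^ δ
        * (b ^ γ * (b - 1) ^ γ / (b ^ γ - 1))) :
    ∀ T₀ : ℝ, 100 ≤ T₀ → l T₀ ≤ 3.34 := by
  intro T₀ hT₀
  rw [hl, hγ, hδ, hb, three_add_sqrt_five_div_two, doubling_constant_goldenRatio,
    goldenRatio_sq_sub_one]
  have hx : 160 ≤ T₀ * φ := by nlinarith [goldenRatio_mem_Ioo.1]
  calc _ ≤ 1.0026 * 3.3302 :=
        mul_le_mul (log_add_one_div_log_rpow_le hx) goldenRatio_sq_mul_sqrt_lt.le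
          (by positivity) (by norm_num)
    _ ≤ 3.34 := by norm_num
end

section
/- The function φ : (1, ∞) → ℝ defined by φ(b) = √b·√(b − 1)/(√b − 1) attains its global minimum over (1, ∞) at b = (3 + √5)/2; that is, φ((3 + √5)/2) ≤ φ(b) for all b > 1. -/
set_option maxHeartbeats 1600000 in
/-- The function `φ(b) = √b·√(b − 1)/(√b − 1)` on `(1, ∞)` attains its global minimum at
`b = (3 + √5)/2`. -/
theorem doubling_rate_minimizer
    (φ : ℝ → ℝ)
    (hφ : ∀ b : ℝ, 1 < b →
      φ b = Real.sqrt b * Real.sqrt (b - 1) / (Real.sqrt b - 1)) :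
    ∀ b : ℝ, 1 < b → φ ((3 + Real.sqrt 5) / 2) ≤ φ b := by
  intro b hb
  have h5 : Real.sqrt 5 ^ 2 = 5 := Real.sq_sqrt (by norm_num)
  have hs5 : (2:ℝ) < Real.sqrt 5 := by nlinarith [Real.sqrt_nonneg 5]
  set g : ℝ := (1 + Real.sqrt 5) / 2 with hg
  have hg1 : 1 < g := by rw [hg]; linarith
  have hgsq : g ^ 2 = g + 1 := by rw [hg]; field_simp; nlinarith
  have hbstar : (3 + Real.sqrt 5) / 2 = g ^ 2 := by rw [hgsq, hg]; ring
  have hbs1 : (1:ℝ) < (3 + Real.sqrt 5) / 2 := by linarith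
  rw [hφ _ hbs1, hφ _ hb]
  have hsqbstar : Real.sqrt ((3 + Real.sqrt 5) / 2) = g := by
    rw [hbstar]; exact Real.sqrt_sq (by linarith)
  have hsub : (3 + Real.sqrt 5) / 2 - 1 = g := by rw [hbstar]; linarith [hgsq]
  rw [hsqbstar, hsub]
  -- now LHS = g * √g / (g - 1)
  set s : ℝ := Real.sqrt b with hsdef
  have hb0 : (0:ℝ) < b := by linarith
  have hs1 : 1 < s := by
    rw [hsdef, show (1:ℝ) = Real.sqrt 1 from (Real.sqrt_one).symm]
    exact Real.sqrt_lt_sqrt (by norm_num) hb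
  have hssq : s ^ 2 = b := Real.sq_sqrt hb0.le
  have hb1 : b - 1 = (s - 1) * (s + 1) := by rw [← hssq]; ring
  have hsplit : Real.sqrt (b - 1) = Real.sqrt (s - 1) * Real.sqrt (s + 1) := by
    rw [hb1, Real.sqrt_mul (by linarith)]
  rw [hsplit]
  set u : ℝ := Real.sqrt (s - 1) with hu
  set v : ℝ := Real.sqrt (s + 1) with hv
  set w : ℝ := Real.sqrt g with hw
  have hu2 : u ^ 2 = s - 1 := Real.sq_sqrt (by linarith)
  have hv2 : v ^ 2 = s + 1 := Real.sq_sqrt (by linarith)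
  have hw2 : w ^ 2 = g := Real.sq_sqrt (by linarith)
  have hu0 : 0 < u := Real.sqrt_pos.mpr (by linarith)
  have hv0 : 0 < v := Real.sqrt_pos.mpr (by linarith)
  have hw0 : 0 < w := Real.sqrt_pos.mpr (by linarith)
  rw [div_le_div_iff₀ (by linarith) (by linarith)]
  -- goal : g * w * (s - 1) ≤ s * (u * v) * (g - 1)
  set A : ℝ := g * w * (s - 1) with hA
  set B : ℝ := s * (u * v) * (g - 1) with hB
  have hApos : 0 < A := by
    have : 0 < s - 1 := by linarith
    positivity
  have hBpos : 0 < B := by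
    have h1 : 0 < g - 1 := by linarith
    have h2 : 0 < s := by linarith
    positivity
  have hg5 : g ^ 5 = 5 * g + 3 := by
    have hg3 : g ^ 3 = 2 * g + 1 := by linear_combination (g + 1) * hgsq
    linear_combination g ^ 2 * hg3 + 2 * hg3 + hgsq
  have hg3 : g ^ 3 = 2 * g + 1 := by linear_combination (g + 1) * hgsq
  have hd : (g - 1) ^ 2 = 2 - g := by linear_combination hgsq
  have hglt2 : g < 2 := by nlinarith [h5]
  have hkey : g ^ 5 * (s - 1) ≤ s ^ 3 + s ^ 2 := by
    have hid : s ^ 3 + s ^ 2 - (5 * g + 3) * (s - 1) = (s - g) ^ 2 * (s + 2 * g + 1) := by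
      linear_combination (3 * s - 1) * hgsq - 2 * hg3
    have hnn : 0 ≤ (s - g) ^ 2 * (s + 2 * g + 1) :=
      mul_nonneg (sq_nonneg _) (by linarith)
    rw [hg5]; linarith
  have hsq : A ^ 2 ≤ B ^ 2 := by
    have hc : g ^ 2 * g = (2 - g) * g ^ 5 := by
      linear_combination hg3 - (2 - g) * hg5 + 5 * hgsq
    have hA2 : A ^ 2 = (2 - g) * (s - 1) * (g ^ 5 * (s - 1)) := by
      have h1 : A ^ 2 = g ^ 2 * w ^ 2 * (s - 1) ^ 2 := by rw [hA]; ring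
      rw [h1, hw2]; linear_combination (s - 1) ^ 2 * hc
    have hB2 : B ^ 2 = (2 - g) * (s - 1) * (s ^ 3 + s ^ 2) := by
      have h1 : B ^ 2 = s ^ 2 * (u ^ 2 * v ^ 2) * (g - 1) ^ 2 := by rw [hB]; ring
      rw [h1, hu2, hv2, hd]; ring
    rw [hA2, hB2]
    exact mul_le_mul_of_nonneg_left hkey
      (mul_nonneg (by linarith) (by linarith))
  nlinarith [hsq, hApos, hBpos]
end
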